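/- arXiv:1412.0231 — 6 statements merged into one kernel-verified Lean document; each statement's English description precedes it below -/
import Mathlib

section
/- Let (d_k, ..., d_0) be a 1089 (n,b)-palintiple (i.e., a symmetric (n,b)-palintiple with n+1 dividing b) with k+1 digits. Then for every integer b̂ with b̂ > n·b and b̂ ≡ n·b (mod b²−1), there exists an asymmetric (b, b̂)-palintiple with k+2 digits whose carries ĉ_0, ĉ_1, ..., ĉ_{k+2} satisfy ĉ_0 = 0, ĉ_j = d_{j−1} for 1 ≤ j ≤ k+1, and ĉ_{k+2} = 0; that is, its carry sequence is (d_k, d_{k−1}, ..., d_0, 0). -/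
open Finset Polynomial

/-- `d 0, ..., d k` are the `k+1` digits (least significant first) of an
`(n,b)`-palintiple. -/
def IsPalintiple (n b : ℤ) (k : ℕ) (d : ℕ → ℤ) : Prop :=
  1 < n ∧ n < b ∧ 1 ≤ k ∧
  (∀ j ≤ k, 0 ≤ d j ∧ d j ≤ b - 1) ∧ d k ≠ 0 ∧ d 0 ≠ 0 ∧
  (∑ j ∈ range (k + 1), d j * b ^ j) = n * ∑ j ∈ range (k + 1), d (k - j) * b ^ j

/-- `c 0, ..., c (k+1)` are the carries of the `(n,b)`-palintiple with digits
`d 0, ..., d k`. -/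
def IsCarries (n b : ℤ) (k : ℕ) (d c : ℕ → ℤ) : Prop :=
  c 0 = 0 ∧ ∀ j ≤ k, n * d (k - j) + c j = d j + b * c (j + 1)

/-- A palintiple with carries `c` is symmetric if `c j = c (k-j)`. -/
def IsSym (k : ℕ) (c : ℕ → ℤ) : Prop := ∀ j ≤ k, c j = c (k - j)

/-- A palintiple with carries `c` is shifted-symmetric if `c j = c (k-j+1)`. -/
def IsShiftedSym (k : ℕ) (c : ℕ → ℤ) : Prop := ∀ j ≤ k, c j = c (k - j + 1)

/-- A palintiple is asymmetric if it is neither symmetric nor shifted-symmetric. -/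
def IsAsym (k : ℕ) (c : ℕ → ℤ) : Prop := ¬ IsSym k c ∧ ¬ IsShiftedSym k c

/-! Write `b̂ = n b + (b² - 1) t` with `t > 0`. The derived palintiple takes the digits of the
1089 palintiple as its carries, and its digits `ĥ_j` are read off from the carry recurrence: in
`b ĥ_{k+1-j} + ĉ_j = ĥ_j + b̂ ĉ_{j+1}` all terms in `t` cancel, because `b (t b + n) - t = b̂`,
and what is left is the carry recurrence of the original palintiple at `j - 1` together with
the symmetry `c_j = c_{k-j}` of its carries. Asymmetry holds because a palintiple is never a
palindrome. -/

namespace IsCarries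

variable {n b : ℤ} {k : ℕ} {d c : ℕ → ℤ}

theorem mul_sum_reverse (hc : IsCarries n b k d c) :
    n * ∑ j ∈ range (k + 1), d (k - j) * b ^ j =
      ∑ j ∈ range (k + 1), d j * b ^ j + c (k + 1) * b ^ (k + 1) := by
  have hstep : ∀ j ∈ range (k + 1), n * (d (k - j) * b ^ j) =
      d j * b ^ j + (c (j + 1) * b ^ (j + 1) - c j * b ^ j) := fun j hj => by
    linear_combination b ^ j * hc.2 j (Nat.lt_succ_iff.mp (mem_range.mp hj))
  rw [mul_sum, sum_congr rfl hstep, sum_add_distrib, sum_range_sub (fun j => c j * b ^ j), hc.1]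
  ring

theorem bounds (hc : IsCarries n b k d c) (hn : 1 ≤ n) (hb : 0 < b)
    (hd : ∀ j ≤ k, 0 ≤ d j ∧ d j ≤ b - 1) : ∀ j ≤ k + 1, 0 ≤ c j ∧ c j ≤ n - 1 := by
  intro j
  induction j with
  | zero => intro _; rw [hc.1]; omega
  | succ j ih =>
    intro hj
    have hrec := hc.2 j (by omega)
    obtain ⟨hcj₀, hcj₁⟩ := ih (by omega)
    obtain ⟨hdj₀, hdj₁⟩ := hd j (by omega)
    obtain ⟨hdr₀, hdr₁⟩ := hd (k - j) (by omega)
    have : n * d (k - j) ≤ n * (b - 1) := mul_le_mul_of_nonneg_left hdr₁ (by omega)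
    constructor
    · nlinarith
    · nlinarith

theorem isPalintiple (hc : IsCarries n b k d c) (hlast : c (k + 1) = 0) (hn : 1 < n)
    (hnb : n < b) (hk : 1 ≤ k) (hd : ∀ j ≤ k, 0 ≤ d j ∧ d j ≤ b - 1) (hdk : d k ≠ 0)
    (hd0 : d 0 ≠ 0) : IsPalintiple n b k d :=
  ⟨hn, hnb, hk, hd, hdk, hd0, by rw [hc.mul_sum_reverse, hlast]; ring⟩

theorem sub_eq_of_isSym (hc : IsCarries n b k d c) (hsym : IsSym k c) (hlast : c (k + 1) = 0) :
    ∀ j ≤ k + 1, c (k - j) = c j := by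
  intro j hj
  rcases hj.lt_or_eq with hj | rfl
  · exact (hsym j (by omega)).symm
  · rw [Nat.sub_eq_zero_of_le (Nat.le_succ k), hc.1, hlast]

end IsCarries

namespace IsPalintiple

variable {n b : ℤ} {k : ℕ} {d c : ℕ → ℤ}

theorem carries_succ_eq_zero (hp : IsPalintiple n b k d) (hc : IsCarries n b k d c) :
    c (k + 1) = 0 := by
  have : c (k + 1) * b ^ (k + 1) = 0 := by linarith [hc.mul_sum_reverse, hp.2.2.2.2.2.2]
  exact (mul_eq_zero.mp this).resolve_right (pow_ne_zero _ (by linarith [hp.1, hp.2.1]))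

theorem not_palindrome (hp : IsPalintiple n b k d) : ¬ ∀ j ≤ k, d j = d (k - j) := by
  obtain ⟨hn, hnb, -, hd, hdk, -, hsum⟩ := hp
  intro hpal
  have hb : 0 < b := by omega
  have hrev : ∑ j ∈ range (k + 1), d (k - j) * b ^ j = ∑ j ∈ range (k + 1), d j * b ^ j :=
    sum_congr rfl fun j hj => by rw [← hpal j (Nat.lt_succ_iff.mp (mem_range.mp hj))]
  rw [hrev] at hsum
  have hpos : 0 < ∑ j ∈ range (k + 1), d j * b ^ j := by
    refine sum_pos' (fun j hj => ?_) ⟨k, self_mem_range_succ k, ?_⟩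
    · exact mul_nonneg (hd j (Nat.lt_succ_iff.mp (mem_range.mp hj))).1 (by positivity)
    · exact mul_pos (lt_of_le_of_ne (hd k le_rfl).1 hdk.symm) (by positivity)
  nlinarith

end IsPalintiple

section Derived

variable {n b t : ℤ} {k : ℕ} {d c : ℕ → ℤ}

variable (k d) in
def derivedCarries (j : ℕ) : ℤ := if 1 ≤ j ∧ j ≤ k + 1 then d (j - 1) else 0

variable (n b t k d c) in
/-- At `i = 0` the last summand is `c (0 - 1) = c 0 = 0`, by truncated subtraction. -/
def derivedDigits (i : ℕ) : ℤ :=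
  t * derivedCarries k d (i + 1) + (t * b + n) * derivedCarries k d (k + 2 - i) + c (i - 1)

@[simp]
theorem derivedCarries_zero : derivedCarries k d 0 = 0 := by
  simp [derivedCarries]

theorem derivedCarries_of_le {j : ℕ} (h₁ : 1 ≤ j) (h₂ : j ≤ k + 1) :
    derivedCarries k d j = d (j - 1) :=
  if_pos ⟨h₁, h₂⟩

theorem derivedCarries_of_lt {j : ℕ} (h : k + 1 < j) : derivedCarries k d j = 0 :=
  if_neg (by omega)

theorem derivedCarries_bounds (hb : 0 < b) (hd : ∀ j ≤ k, 0 ≤ d j ∧ d j ≤ b - 1) (j : ℕ) :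
    0 ≤ derivedCarries k d j ∧ derivedCarries k d j ≤ b - 1 := by
  unfold derivedCarries
  split_ifs with h
  · exact hd (j - 1) (by omega)
  · omega

theorem derivedDigits_zero (hc₀ : c 0 = 0) : derivedDigits n b t k d c 0 = t * d 0 := by
  simp [derivedDigits, derivedCarries_of_le le_rfl (by omega : 1 ≤ k + 1),
    derivedCarries_of_lt (show k + 1 < k + 2 by omega), hc₀]

theorem derivedDigits_last (hck : c k = 0) :
    derivedDigits n b t k d c (k + 1) = (t * b + n) * d 0 := by
  simp [derivedDigits, derivedCarries_of_le le_rfl (by omega : 1 ≤ k + 1),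
    derivedCarries_of_lt (show k + 1 < k + 1 + 1 by omega), show k + 2 - (k + 1) = 1 by omega, hck]

theorem derivedCarries_rec (hc : IsCarries n b k d c) (hrefl : ∀ j ≤ k + 1, c (k - j) = c j)
    {j : ℕ} (hj : j ≤ k + 1) :
    n * derivedCarries k d (k + 2 - j) + c (j - 1) = derivedCarries k d j + b * c (k - j) := by
  rcases Nat.eq_zero_or_pos j with rfl | hj₀
  · have hck : c k = 0 := by simpa [hc.1] using hrefl 0 (by omega)
    simp [derivedCarries_of_lt, hc.1, hck]
  · have hrec := hc.2 (j - 1) (by omega)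
    rw [derivedCarries_of_le (by omega) (by omega), derivedCarries_of_le hj₀ hj,
      hrefl j hj, show k + 2 - j - 1 = k - (j - 1) by omega]
    rwa [Nat.sub_add_cancel hj₀] at hrec

theorem isCarries_derived (hc : IsCarries n b k d c) (hrefl : ∀ j ≤ k + 1, c (k - j) = c j) :
    IsCarries b (n * b + (b ^ 2 - 1) * t) (k + 1) (derivedDigits n b t k d c)
      (derivedCarries k d) := by
  refine ⟨derivedCarries_zero, fun j hj => ?_⟩
  unfold derivedDigits
  rw [show k + 1 - j + 1 = k + 2 - j by omega, show k + 2 - (k + 1 - j) = j + 1 by omega,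
    show k + 1 - j - 1 = k - j by omega]
  linear_combination -derivedCarries_rec hc hrefl hj

theorem derivedDigits_bounds (ht : 0 ≤ t) (hn : 1 ≤ n) (hb : 0 < b)
    (hd : ∀ j ≤ k, 0 ≤ d j ∧ d j ≤ b - 1) (hcb : ∀ j ≤ k + 1, 0 ≤ c j ∧ c j ≤ n - 1)
    {i : ℕ} (hi : i ≤ k + 1) :
    0 ≤ derivedDigits n b t k d c i ∧
      derivedDigits n b t k d c i ≤ n * b + (b ^ 2 - 1) * t - 1 := by
  obtain ⟨hx₀, hx₁⟩ := derivedCarries_bounds hb hd (i + 1)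
  obtain ⟨hy₀, hy₁⟩ := derivedCarries_bounds hb hd (k + 2 - i)
  obtain ⟨hc₀, hc₁⟩ := hcb (i - 1) (by omega)
  have htbn : 0 ≤ t * b + n := by positivity
  have := mul_le_mul_of_nonneg_left hx₁ ht
  have := mul_le_mul_of_nonneg_left hy₁ htbn
  unfold derivedDigits
  constructor
  · positivity
  · nlinarith

theorem isPalintiple_derived (hp : IsPalintiple n b k d) (hc : IsCarries n b k d c)
    (hrefl : ∀ j ≤ k + 1, c (k - j) = c j) (ht : 0 < t) :
    IsPalintiple b (n * b + (b ^ 2 - 1) * t) (k + 1) (derivedDigits n b t k d c) := by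
  obtain ⟨hn, hnb, hk, hd, -, hd0, -⟩ := hp
  have hd0 : 0 < d 0 := lt_of_le_of_ne (hd 0 (by omega)).1 (Ne.symm hd0)
  have hck : c k = 0 := by simpa [hc.1] using hrefl 0 (by omega)
  have hcb := hc.bounds (by omega) (by omega) hd
  have hbh : b < n * b + (b ^ 2 - 1) * t := by nlinarith [mul_pos (by nlinarith : 0 < b ^ 2 - 1) ht]
  refine (isCarries_derived hc hrefl).isPalintiple (derivedCarries_of_lt (by omega)) (by omega) hbh
    (by omega) (fun i => derivedDigits_bounds ht.le (by omega) (by omega) hd hcb) ?_ ?_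
  · rw [derivedDigits_last hck]
    exact (mul_pos (by nlinarith) hd0).ne'
  · rw [derivedDigits_zero hc.1]
    exact (mul_pos ht hd0).ne'

theorem isAsym_derivedCarries (hp : IsPalintiple n b k d) :
    IsAsym (k + 1) (derivedCarries k d) := by
  refine ⟨fun hsym => hp.2.2.2.2.1 ?_, fun hshift => hp.not_palindrome fun j hj => ?_⟩
  · have := hsym 0 (by omega)
    rw [derivedCarries_zero, Nat.sub_zero, derivedCarries_of_le (by omega) le_rfl] at this
    simpa using this.symm
  · have := hshift (j + 1) (by omega)
    rwa [derivedCarries_of_le (by omega) (by omega), derivedCarries_of_le (by omega) (by omega),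
      show k + 1 - (j + 1) + 1 - 1 = k - j by omega, Nat.add_sub_cancel] at this

end Derived

theorem singly_derived_from_1089_general (n b : ℤ) (k : ℕ) (d c : ℕ → ℤ)
    (hp : IsPalintiple n b k d) (hc : IsCarries n b k d c)
    (hsym : IsSym k c) :
    ∀ bh : ℤ, n * b < bh → bh ≡ n * b [ZMOD b ^ 2 - 1] →
      ∃ dh ch : ℕ → ℤ,
        IsPalintiple b bh (k + 1) dh ∧ IsCarries b bh (k + 1) dh ch ∧
        IsAsym (k + 1) ch ∧
        ch 0 = 0 ∧ (∀ j, 1 ≤ j → j ≤ k + 1 → ch j = d (j - 1)) ∧ ch (k + 2) = 0 := by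
  intro bh hbh hcong
  obtain ⟨t, rfl⟩ := Int.modEq_iff_add_fac.mp hcong.symm
  have ht : 0 < t :=
    pos_of_mul_pos_right (a := b ^ 2 - 1) (by linarith) (by nlinarith [hp.1, hp.2.1])
  have hrefl := hc.sub_eq_of_isSym hsym (hp.carries_succ_eq_zero hc)
  exact ⟨derivedDigits n b t k d c, derivedCarries k d, isPalintiple_derived hp hc hrefl ht,
    isCarries_derived hc hrefl, isAsym_derivedCarries hp, derivedCarries_zero,
    fun j h₁ h₂ => derivedCarries_of_le h₁ h₂, derivedCarries_of_lt (by omega)⟩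

/-- **Theorem (singly-derived Hoey palintiples).** If `(d k, ..., d 0)` is a 1089
`(n,b)`-palintiple (symmetric with `n+1 ∣ b`), then for every `b̂ > n·b` with
`b̂ ≡ n·b (mod b²-1)` there is an asymmetric `(k+2)`-digit `(b,b̂)`-palintiple with
carry sequence `(d k, ..., d 0, 0)`. -/
theorem singly_derived_from_1089 (n b : ℤ) (k : ℕ) (d c : ℕ → ℤ)
    (hp : IsPalintiple n b k d) (hc : IsCarries n b k d c)
    (hsym : IsSym k c) (hdvd : n + 1 ∣ b) :
    ∀ bh : ℤ, n * b < bh → bh ≡ n * b [ZMOD b ^ 2 - 1] →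
      ∃ dh ch : ℕ → ℤ,
        IsPalintiple b bh (k + 1) dh ∧ IsCarries b bh (k + 1) dh ch ∧
        IsAsym (k + 1) ch ∧
        ch 0 = 0 ∧ (∀ j, 1 ≤ j → j ≤ k + 1 → ch j = d (j - 1)) ∧ ch (k + 2) = 0 :=
  singly_derived_from_1089_general n b k d c hp hc hsym
end

section
/- Let (d_1, d_0) be a 2-digit (n,b)-palintiple. If there exists an integer n̂ > max{d_0, d_1} such that (b−n) divides n̂(nb−1), with s = n̂(nb−1)/(b−n), and s·d_1 ≡ d_0 (mod n̂−1), then for every integer α ≥ 1 there exists an asymmetric 3-digit (n̂, b̂)-palintiple with b̂ = s + α(n̂²−1)/gcd(d_0, n̂²−1), whose carries ĉ_0, ĉ_1, ĉ_2, ĉ_3 satisfy ĉ_0 = 0, ĉ_1 = d_0, ĉ_2 = d_1, ĉ_3 = 0 (carry sequence (d_1, d_0, 0)). -/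
open Finset Polynomial

/-!
A 3-digit `(n̂, b̂)`-palintiple with carries `(0, x, y, 0)` is forced by the carry equations to
have digits `e₀, e₁, e₂ = n̂ e₀ + y` with `(n̂² - 1) e₀ = b̂ x - n̂ y` and `(n̂ - 1) e₁ = b̂ y - x`;
when `0 < x < y < n̂ < b̂` these are genuine digits as soon as the two divisions are exact and
`n̂ y < b̂ x`. For `x = d₀`, `y = d₁` the 2-digit relation `d₁ (b - n) = d₀ (n b - 1)` gives
`s d₀ = n̂ d₁`, so with `b̂ = s + α m`, `m = (n̂² - 1) / gcd(d₀, n̂² - 1)`, one has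
`b̂ d₀ - n̂ d₁ = α m d₀`, a multiple of `n̂² - 1`, and `b̂ d₁ - d₀ ≡ s d₁ - d₀ (mod n̂ - 1)`,
because `gcd(d₀, n̂² - 1)` is coprime to `n̂` and hence divides `d₁`.
-/

lemma IsCarries.sum_range_add_pow_mul {n b : ℤ} {k : ℕ} {d c : ℕ → ℤ} (hc : IsCarries n b k d c) :
    ∀ i ≤ k + 1, ∑ j ∈ range i, d j * b ^ j + b ^ i * c i =
      n * ∑ j ∈ range i, d (k - j) * b ^ j := by
  intro i hi
  induction i with
  | zero => simp [hc.1]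
  | succ i ih =>
    have hstep := hc.2 i (by omega)
    rw [sum_range_succ, sum_range_succ, mul_add, ← ih (by omega)]
    linear_combination -b ^ i * hstep

lemma IsCarries.sum_eq {n b : ℤ} {k : ℕ} {d c : ℕ → ℤ} (hc : IsCarries n b k d c)
    (hlast : c (k + 1) = 0) :
    ∑ j ∈ range (k + 1), d j * b ^ j = n * ∑ j ∈ range (k + 1), d (k - j) * b ^ j := by
  simpa [hlast] using hc.sum_range_add_pow_mul (k + 1) le_rfl

lemma IsPalintiple.two_digit_eq {n b : ℤ} {d : ℕ → ℤ} (hp : IsPalintiple n b 1 d) :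
    d 1 * (b - n) = d 0 * (n * b - 1) := by
  have hsum := hp.2.2.2.2.2.2
  simp only [sum_range_succ, sum_range_zero] at hsum
  norm_num at hsum
  linear_combination hsum

lemma IsPalintiple.two_digit_pos_lt {n b : ℤ} {d : ℕ → ℤ} (hp : IsPalintiple n b 1 d) :
    0 < d 0 ∧ d 0 < d 1 := by
  have hrel := hp.two_digit_eq
  obtain ⟨hn, hnb, -, hdig, -, hd0, -⟩ := hp
  have hpos : 0 < d 0 := lt_of_le_of_ne (hdig 0 (by norm_num)).1 (Ne.symm hd0)
  refine ⟨hpos, lt_of_mul_lt_mul_right (a := b - n) ?_ (by linarith)⟩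
  rw [hrel]
  exact mul_lt_mul_of_pos_left (by nlinarith) hpos

lemma exists_three_digit_asym {nh bh x y : ℤ} (hn : 1 < nh) (hnb : nh < bh)
    (hx : 0 < x) (hxy : x < y) (hy : y < nh) (hlt : nh * y < bh * x)
    (hdvd₀ : nh ^ 2 - 1 ∣ bh * x - nh * y) (hdvd₁ : nh - 1 ∣ bh * y - x) :
    ∃ dh ch : ℕ → ℤ,
      IsPalintiple nh bh 2 dh ∧ IsCarries nh bh 2 dh ch ∧ IsAsym 2 ch ∧
      ch 0 = 0 ∧ ch 1 = x ∧ ch 2 = y ∧ ch 3 = 0 := by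
  obtain ⟨e₀, he₀⟩ := hdvd₀
  obtain ⟨e₁, he₁⟩ := hdvd₁
  set e₂ := nh * e₀ + y with he₂
  have hsq : 0 < nh ^ 2 - 1 := by nlinarith
  have he₀pos : 0 < e₀ := pos_of_mul_pos_right (he₀ ▸ sub_pos.2 hlt) hsq.le
  have he₂pos : 0 < e₂ := by nlinarith
  have he₂lt : e₂ < bh := by
    refine lt_of_mul_lt_mul_left (a := nh ^ 2 - 1) ?_ hsq.le
    have hx' : nh * bh * x ≤ nh * bh * (nh - 1) :=
      mul_le_mul_of_nonneg_left (by linarith) (by nlinarith)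
    nlinarith
  have he₁nonneg : 0 ≤ e₁ := by
    refine nonneg_of_mul_nonneg_right (a := nh - 1) ?_ (by linarith)
    nlinarith
  have he₁lt : e₁ < bh := by
    refine lt_of_mul_lt_mul_left (a := nh - 1) ?_ (by linarith)
    nlinarith
  set dh : ℕ → ℤ := fun j => [e₀, e₁, e₂].getD j 0
  set ch : ℕ → ℤ := fun j => [0, x, y].getD j 0
  have hcarries : IsCarries nh bh 2 dh ch := by
    refine ⟨rfl, fun j hj => ?_⟩
    interval_cases j
    · show nh * e₂ + 0 = e₀ + bh * x
      linear_combination -he₀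
    · show nh * e₁ + x = e₁ + bh * y
      linear_combination -he₁
    · show nh * e₀ + y = e₂ + bh * 0
      ring
  refine ⟨dh, ch, ⟨hn, hnb, by norm_num, fun j hj => ?_, he₂pos.ne', he₀pos.ne',
    hcarries.sum_eq rfl⟩, hcarries, ⟨fun h => ?_, fun h => ?_⟩, rfl, rfl, rfl, rfl⟩
  · interval_cases j
    · exact ⟨he₀pos.le, show e₀ ≤ bh - 1 by nlinarith⟩
    · exact ⟨he₁nonneg, show e₁ ≤ bh - 1 by linarith⟩
    · exact ⟨he₂pos.le, show e₂ ≤ bh - 1 by linarith⟩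
  · exact (hx.trans hxy).ne (h 0 (by norm_num))
  · exact hxy.ne (h 1 (by norm_num))

lemma gcd_sq_sub_one_dvd_of_mul_eq_mul {s nh d₀ d₁ : ℤ} (h : s * d₀ = nh * d₁) :
    (Int.gcd d₀ (nh ^ 2 - 1) : ℤ) ∣ d₁ := by
  obtain ⟨m, hm⟩ := Int.gcd_dvd_right d₀ (nh ^ 2 - 1)
  have hcop : IsCoprime (Int.gcd d₀ (nh ^ 2 - 1) : ℤ) nh := ⟨-m, nh, by linear_combination hm⟩
  exact hcop.dvd_of_dvd_mul_left (h ▸ (Int.gcd_dvd_left d₀ _).mul_left s)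

lemma dvd_ediv_gcd_mul {a d e : ℤ} (h : (Int.gcd d a : ℤ) ∣ e) :
    a ∣ a / Int.gcd d a * e := by
  obtain ⟨q, rfl⟩ := h
  exact ⟨q, by rw [← mul_assoc, Int.ediv_mul_cancel (Int.gcd_dvd_right d a)]⟩

/-- **Corollary.** Asymmetric 3-digit palintiples derived from a 2-digit
`(n,b)`-palintiple `(d 1, d 0)`, with carry sequence `(d 1, d 0, 0)`. -/
theorem asym_existence_from_two_digit (n b : ℤ) (d : ℕ → ℤ)
    (hp : IsPalintiple n b 1 d)
    (nh : ℤ) (hnh : max (d 0) (d 1) < nh)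
    (hdvd : b - n ∣ nh * (n * b - 1))
    (s : ℤ) (hs : s = nh * (n * b - 1) / (b - n))
    (hcong : s * d 1 ≡ d 0 [ZMOD nh - 1]) :
    ∀ α : ℤ, 1 ≤ α →
      ∃ dh ch : ℕ → ℤ,
        IsPalintiple nh (s + α * ((nh ^ 2 - 1) / (Int.gcd (d 0) (nh ^ 2 - 1) : ℤ))) 2 dh ∧
        IsCarries nh (s + α * ((nh ^ 2 - 1) / (Int.gcd (d 0) (nh ^ 2 - 1) : ℤ))) 2 dh ch ∧
        IsAsym 2 ch ∧
        ch 0 = 0 ∧ ch 1 = d 0 ∧ ch 2 = d 1 ∧ ch 3 = 0 := by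
  intro α hα
  obtain ⟨hd₀, hd₀₁⟩ := hp.two_digit_pos_lt
  have hd₁ : d 1 < nh := (le_max_right _ _).trans_lt hnh
  have hbn : 0 < b - n := sub_pos.2 hp.2.1
  have hsd : s * d 0 = nh * d 1 := by
    have hs' : s * (b - n) = nh * (n * b - 1) := hs ▸ Int.ediv_mul_cancel hdvd
    refine mul_right_cancel₀ hbn.ne' ?_
    linear_combination d 0 * hs' - nh * hp.two_digit_eq
  set m := (nh ^ 2 - 1) / (Int.gcd (d 0) (nh ^ 2 - 1) : ℤ)
  have hm : 0 < m :=
    Int.ediv_pos_of_pos_of_dvd (by nlinarith) (by positivity) (Int.gcd_dvd_right _ _)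
  have hαm : 0 < α * m := mul_pos (by linarith) hm
  have hsnh : nh < s := lt_of_mul_lt_mul_right (a := d 0) (by nlinarith) hd₀.le
  refine exists_three_digit_asym (by linarith) (by linarith) hd₀ hd₀₁ hd₁ (by nlinarith) ?_ ?_
  · have hm₀ : nh ^ 2 - 1 ∣ m * d 0 := dvd_ediv_gcd_mul (Int.gcd_dvd_left _ _)
    rw [show (s + α * m) * d 0 - nh * d 1 = α * (m * d 0) by linear_combination hsd]
    exact hm₀.mul_left α
  · have hm₁ : nh ^ 2 - 1 ∣ m * d 1 := dvd_ediv_gcd_mul (gcd_sq_sub_one_dvd_of_mul_eq_mul hsd)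
    have hsub : nh - 1 ∣ nh ^ 2 - 1 := ⟨nh + 1, by ring⟩
    rw [show (s + α * m) * d 1 - d 0 = (s * d 1 - d 0) + α * (m * d 1) by ring]
    exact dvd_add hcong.symm.dvd ((hsub.trans hm₁).mul_left α)
end

section
/- Let (d_k, ..., d_0) be a 1089 (n,b)-palintiple (a symmetric (n,b)-palintiple with n+1 dividing b) such that gcd(n, b²−1) = 1. Let m be the multiplicative inverse of n modulo b²−1, and let ℓ be the least non-negative residue of m·b modulo b²−1. Then for every integer b̂ with b̂ > ℓ and b̂ ≡ ℓ (mod b²−1), there exists an asymmetric (k+2)-digit (b, b̂)-palintiple whose carries ĉ_0, ..., ĉ_{k+2} satisfy ĉ_0 = 0, ĉ_j = d_{k−j+1} for 1 ≤ j ≤ k+1, and ĉ_{k+2} = 0 (carry sequence (d_0, d_1, ..., d_k, 0)). -/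
/-!
The carries of a palintiple determine its digits: eliminating `d (K - j)` between the carry
recurrences at `j` and at `K - j` gives `(N² - 1) d j = B S_j - T_j`, where `S_j` and `T_j` are
two-digit base-`N` numbers formed from carries. So a candidate carry sequence `e` is the carry
sequence of an `(N, B)`-palintiple as soon as these numerators are divisible by `N² - 1` and the
quotients are digits, and they are digits unless some `e x = 0` faces `e (K + 1 - x) = N - 1`.

For the carries `(0, d k, ..., d 0, 0)` of the derived palintiple, `n bh ≡ b [ZMOD b² - 1]` and
`gcd(n, b² - 1) = 1` reduce divisibility to `n T_j ≡ b S_j`, which is a combination of the carry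
recurrences of the symmetric palintiple `d` at two mirrored positions. The digit condition is the
fact that no palintiple has `d j = 0` and `d (k - j) = b - 1`. The derived palintiple is not
symmetric since its carries start with `0` and end with `d 0 ≠ 0`, and shifted symmetry would make
`d` a palindrome, impossible for a multiplier `n > 1`.
-/

open Finset Polynomial

section Palintiple

variable {n b : ℤ} {k : ℕ} {d c : ℕ → ℤ}

theorem sum_sub_mul_sum_rev_eq_of_carries
    (h : ∀ j ≤ k, n * d (k - j) + c j = d j + b * c (j + 1)) :
    ∑ j ∈ range (k + 1), d j * b ^ j - n * ∑ j ∈ range (k + 1), d (k - j) * b ^ j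
      = c 0 - c (k + 1) * b ^ (k + 1) := by
  have htel := sum_range_sub' (fun j => c j * b ^ j) (k + 1)
  rw [pow_zero, mul_one] at htel
  rw [mul_sum, ← sum_sub_distrib, ← htel]
  refine sum_congr rfl fun j hj => ?_
  linear_combination -b ^ j * h j (by simpa [Nat.lt_succ_iff] using hj)

theorem IsPalintiple.carries_mem (hp : IsPalintiple n b k d) (hc : IsCarries n b k d c) :
    ∀ j ≤ k + 1, 0 ≤ c j ∧ c j ≤ n - 1 := by
  obtain ⟨hn, hnb, -, hdig, -⟩ := hp
  intro j
  induction j with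
  | zero => intro _; rw [hc.1]; omega
  | succ i ih =>
    intro hi
    have hrec := hc.2 i (by omega)
    have hci := ih (by omega)
    have hdi := hdig i (by omega)
    have hdr := hdig (k - i) (by omega)
    constructor <;> by_contra! h <;> nlinarith

theorem IsPalintiple.carries_last (hp : IsPalintiple n b k d) (hc : IsCarries n b k d c) :
    c (k + 1) = 0 := by
  have h := sum_sub_mul_sum_rev_eq_of_carries hc.2
  rw [hp.2.2.2.2.2.2, sub_self, hc.1, zero_sub, zero_eq_neg] at h
  exact (mul_eq_zero.1 h).resolve_right (pow_ne_zero _ (by linarith [hp.1, hp.2.1]))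

theorem IsPalintiple.rev_ne_pred_of_eq_zero (hp : IsPalintiple n b k d)
    (hc : IsCarries n b k d c) {j : ℕ} (hj : j ≤ k) (h0 : d j = 0) : d (k - j) ≠ b - 1 := by
  intro hmax
  have hrec := hc.2 j hj
  have hcj := (hp.carries_mem hc j (by omega)).1
  have hcj1 := (hp.carries_mem hc (j + 1) (by omega)).2
  rw [h0, hmax] at hrec
  nlinarith [hp.1, hp.2.1]

theorem IsPalintiple.not_palindrome_s6 (hp : IsPalintiple n b k d) :
    ¬ ∀ j ≤ k, d (k - j) = d j := by
  obtain ⟨hn, hnb, -, hdig, -, hd0, hsum⟩ := hp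
  intro hpal
  have hrev : ∑ j ∈ range (k + 1), d (k - j) * b ^ j = ∑ j ∈ range (k + 1), d j * b ^ j :=
    sum_congr rfl fun j hj => by rw [hpal j (by simpa [Nat.lt_succ_iff] using hj)]
  rw [hrev] at hsum
  have hpos : d 0 ≤ ∑ j ∈ range (k + 1), d j * b ^ j := by
    refine le_of_eq_of_le (by simp) (single_le_sum (f := fun j => d j * b ^ j) (fun j hj => ?_)
      (mem_range.2 (Nat.succ_pos k)))
    exact mul_nonneg (hdig j (by simpa [Nat.lt_succ_iff] using hj)).1 (pow_nonneg (by omega) j)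
  have := (hdig 0 (Nat.zero_le k)).1
  nlinarith [lt_of_le_of_ne this (Ne.symm hd0)]

theorem IsSym.last_digit_eq (hp : IsPalintiple n b k d) (hc : IsCarries n b k d c)
    (hsym : IsSym k c) : d k = n * d 0 := by
  have hrec := hc.2 k le_rfl
  rw [Nat.sub_self, ← Nat.sub_zero k, ← hsym 0 (Nat.zero_le k), hc.1, Nat.sub_zero,
    hp.carries_last hc] at hrec
  linarith

end Palintiple

theorem two_digit_mem {N a c : ℤ} (hN : 0 < N) (ha : 0 ≤ a ∧ a ≤ N - 1)
    (hc : 0 ≤ c ∧ c ≤ N - 1) :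
    0 ≤ N * a + c ∧ N * a + c ≤ N ^ 2 - 1 := by
  constructor <;> nlinarith

theorem two_digit_eq_zero {N a c : ℤ} (hN : 0 < N) (ha : 0 ≤ a) (hc : 0 ≤ c)
    (h : N * a + c = 0) : a = 0 ∧ c = 0 := by
  constructor <;> nlinarith

theorem two_digit_eq_max {N a c : ℤ} (hN : 0 < N) (ha : a ≤ N - 1) (hc : c ≤ N - 1)
    (h : N * a + c = N ^ 2 - 1) : a = N - 1 ∧ c = N - 1 := by
  constructor <;> nlinarith

theorem mem_digits_of_mul_eq_mul_sub {E B S T q : ℤ} (hB : 0 < B)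
    (hS : 0 ≤ S ∧ S ≤ E) (hT : 0 ≤ T ∧ T ≤ E) (hS0 : S = 0 → T ≠ E) (hSE : S = E → T ≠ 0)
    (hq : E * q = B * S - T) : 0 ≤ q ∧ q ≤ B - 1 := by
  constructor
  · by_contra! hneg
    have : B * S ≤ 0 := by nlinarith
    have hS' : S = 0 := by nlinarith
    exact hS0 hS' (by subst hS'; nlinarith)
  · by_contra! hbig
    have : B * (E - S) ≤ 0 := by nlinarith
    have hS' : S = E := by nlinarith
    exact hSE hS' (by subst hS'; nlinarith)

/-- Solving the carry recurrences at `j` and `K - j` for the digit `d j` gives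
`(N ^ 2 - 1) * d j = digitsOfCarriesNum N B K e j`. -/
def digitsOfCarriesNum (N B : ℤ) (K : ℕ) (e : ℕ → ℤ) (j : ℕ) : ℤ :=
  B * (N * e (K + 1 - j) + e (j + 1)) - (N * e (K - j) + e j)

def digitsOfCarries (N B : ℤ) (K : ℕ) (e : ℕ → ℤ) (j : ℕ) : ℤ :=
  digitsOfCarriesNum N B K e j / (N ^ 2 - 1)

section DigitsOfCarries

variable {N B : ℤ} {K : ℕ} {e : ℕ → ℤ}

theorem mul_digitsOfCarries (hdvd : ∀ j ≤ K, N ^ 2 - 1 ∣ digitsOfCarriesNum N B K e j)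
    {j : ℕ} (hj : j ≤ K) :
    (N ^ 2 - 1) * digitsOfCarries N B K e j
      = B * (N * e (K + 1 - j) + e (j + 1)) - (N * e (K - j) + e j) :=
  Int.mul_ediv_cancel' (hdvd j hj)

theorem isCarries_digitsOfCarries (hN : N ^ 2 - 1 ≠ 0) (he0 : e 0 = 0)
    (hdvd : ∀ j ≤ K, N ^ 2 - 1 ∣ digitsOfCarriesNum N B K e j) :
    IsCarries N B K (digitsOfCarries N B K e) e := by
  refine ⟨he0, fun j hj => mul_left_cancel₀ hN ?_⟩
  have hj' := mul_digitsOfCarries hdvd hj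
  have hrev := mul_digitsOfCarries hdvd (Nat.sub_le K j)
  rw [show K + 1 - (K - j) = j + 1 by omega, Nat.sub_sub_self hj,
    show K - j + 1 = K + 1 - j by omega] at hrev
  linear_combination N * hrev - hj'

theorem digitsOfCarries_mem (hN : 0 < N) (hB : 0 < B) (he : ∀ x, 0 ≤ e x ∧ e x ≤ N - 1)
    (hex : ∀ x ≤ K + 1, e x = 0 → e (K + 1 - x) ≠ N - 1)
    (hdvd : ∀ j ≤ K, N ^ 2 - 1 ∣ digitsOfCarriesNum N B K e j) {j : ℕ} (hj : j ≤ K) :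
    0 ≤ digitsOfCarries N B K e j ∧ digitsOfCarries N B K e j ≤ B - 1 := by
  refine mem_digits_of_mul_eq_mul_sub hB (two_digit_mem hN (he _) (he _))
    (two_digit_mem hN (he _) (he _)) (fun hS hT => ?_) (fun hS hT => ?_)
    (mul_digitsOfCarries hdvd hj)
  · obtain ⟨hhigh, -⟩ := two_digit_eq_zero hN (he _).1 (he _).1 hS
    obtain ⟨-, hlow⟩ := two_digit_eq_max hN (he _).2 (he _).2 hT
    exact hex (K + 1 - j) (by omega) hhigh (by rwa [Nat.sub_sub_self (by omega)])
  · obtain ⟨hhigh, -⟩ := two_digit_eq_max hN (he _).2 (he _).2 hS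
    obtain ⟨-, hlow⟩ := two_digit_eq_zero hN (he _).1 (he _).1 hT
    exact hex j (by omega) hlow hhigh

theorem isPalintiple_digitsOfCarries (hN : 1 < N) (hB : N ^ 2 - 1 ≤ B) (hK : 1 ≤ K)
    (he0 : e 0 = 0) (heK : e (K + 1) = 0) (he1 : 0 < e 1) (he : ∀ x, 0 ≤ e x ∧ e x ≤ N - 1)
    (hex : ∀ x ≤ K + 1, e x = 0 → e (K + 1 - x) ≠ N - 1)
    (hdvd : ∀ j ≤ K, N ^ 2 - 1 ∣ digitsOfCarriesNum N B K e j) :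
    IsPalintiple N B K (digitsOfCarries N B K e) ∧
      IsCarries N B K (digitsOfCarries N B K e) e := by
  have hNB : N < B := by nlinarith
  have hc := isCarries_digitsOfCarries (by nlinarith) he0 hdvd
  have hfirst : digitsOfCarries N B K e 0 ≠ 0 := by
    intro h
    have h0 := mul_digitsOfCarries hdvd (Nat.zero_le K)
    rw [h, Nat.sub_zero, Nat.sub_zero, heK, he0] at h0
    nlinarith [he K]
  have hlast : digitsOfCarries N B K e K ≠ 0 := by
    intro h
    have hK' := mul_digitsOfCarries hdvd le_rfl
    rw [h, Nat.sub_self, Nat.add_sub_cancel_left, heK, he0] at hK'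
    have : N ≤ N * (B * e 1) := le_mul_of_one_le_right (by omega) (by nlinarith)
    nlinarith [he K]
  have hsum := sum_sub_mul_sum_rev_eq_of_carries hc.2
  rw [he0, heK, zero_mul, sub_zero, sub_eq_zero] at hsum
  exact ⟨⟨hN, hNB, hK, fun j hj => digitsOfCarries_mem (by omega) (by omega) he hex hdvd hj,
    hlast, hfirst, hsum⟩, hc⟩

end DigitsOfCarries

def rhoCarries (k : ℕ) (d : ℕ → ℤ) (j : ℕ) : ℤ :=
  if 1 ≤ j ∧ j ≤ k + 1 then d (k + 1 - j) else 0

section RhoCarries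

variable {n b : ℤ} {k : ℕ} {d c : ℕ → ℤ}

@[simp]
theorem rhoCarries_zero : rhoCarries k d 0 = 0 := by
  simp [rhoCarries]

theorem rhoCarries_of_lt {j : ℕ} (hj : k + 1 < j) : rhoCarries k d j = 0 := by
  rw [rhoCarries, if_neg (by omega)]

theorem rhoCarries_of_add {i j : ℕ} (h : i + j = k + 1) (hj : 1 ≤ j) :
    rhoCarries k d j = d i := by
  rw [rhoCarries, if_pos ⟨hj, by omega⟩, show k + 1 - j = i by omega]

theorem IsPalintiple.rhoCarries_mem (hp : IsPalintiple n b k d) (x : ℕ) :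
    0 ≤ rhoCarries k d x ∧ rhoCarries k d x ≤ b - 1 := by
  unfold rhoCarries
  split_ifs
  · exact hp.2.2.2.1 _ (by omega)
  · constructor <;> linarith [hp.1, hp.2.1]

theorem IsPalintiple.rhoCarries_one_pos (hp : IsPalintiple n b k d) : 0 < rhoCarries k d 1 := by
  rw [rhoCarries_of_add (i := k) (j := 1) rfl le_rfl]
  exact lt_of_le_of_ne (hp.2.2.2.1 k le_rfl).1 (Ne.symm hp.2.2.2.2.1)

theorem IsPalintiple.rhoCarries_ne_pred_of_eq_zero (hp : IsPalintiple n b k d)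
    (hc : IsCarries n b k d c) {x : ℕ} (hx : x ≤ k + 2) (h0 : rhoCarries k d x = 0) :
    rhoCarries k d (k + 2 - x) ≠ b - 1 := by
  have hb : 1 < b := by linarith [hp.1, hp.2.1]
  rcases Nat.eq_zero_or_pos x with rfl | hx1
  · rw [rhoCarries_of_lt (by omega)]; omega
  rcases hx.eq_or_lt with rfl | hxk
  · rw [Nat.sub_self, rhoCarries_zero]; omega
  rw [rhoCarries_of_add (i := k + 1 - x) (j := x) (by omega) hx1] at h0
  rw [rhoCarries_of_add (i := x - 1) (j := k + 2 - x) (by omega) (by omega),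
    show x - 1 = k - (k + 1 - x) by omega]
  exact hp.rev_ne_pred_of_eq_zero hc (by omega) h0

theorem IsSym.dvd_rhoCarries (hp : IsPalintiple n b k d) (hc : IsCarries n b k d c)
    (hsym : IsSym k c) {j : ℕ} (hj : j ≤ k + 1) :
    b ^ 2 - 1 ∣ n * (b * rhoCarries k d (k + 1 - j) + rhoCarries k d j)
      - b * (b * rhoCarries k d (k + 2 - j) + rhoCarries k d (j + 1)) := by
  have hlast := hsym.last_digit_eq hp hc
  rcases Nat.eq_zero_or_pos j with rfl | hj1
  · simp only [Nat.sub_zero, zero_add, rhoCarries_zero]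
    rw [rhoCarries_of_add (i := 0) (j := k + 1) (by omega) (by omega),
      rhoCarries_of_lt (j := k + 2) (by omega),
      rhoCarries_of_add (i := k) (j := 1) (by omega) le_rfl, hlast]
    exact ⟨0, by ring⟩
  rcases hj.eq_or_lt with rfl | hjk
  · rw [Nat.sub_self, show k + 2 - (k + 1) = 1 by omega,
      rhoCarries_of_lt (j := k + 1 + 1) (by omega),
      rhoCarries_of_add (i := 0) (j := k + 1) (by omega) (by omega),
      rhoCarries_of_add (i := k) (j := 1) (by omega) le_rfl, hlast, rhoCarries_zero]
    exact ⟨-(n * d 0), by ring⟩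
  obtain ⟨i, rfl⟩ : ∃ i, j = i + 1 := ⟨j - 1, by omega⟩
  obtain ⟨r, rfl⟩ : ∃ r, k = i + 1 + r := ⟨k - (i + 1), by omega⟩
  rw [show i + 1 + r + 1 - (i + 1) = r + 1 by omega,
    show i + 1 + r + 2 - (i + 1) = r + 2 by omega,
    rhoCarries_of_add (i := i + 1) (j := r + 1) (by omega) (by omega),
    rhoCarries_of_add (i := r + 1) (j := i + 1) (by omega) (by omega),
    rhoCarries_of_add (i := i) (j := r + 2) (by omega) (by omega),
    rhoCarries_of_add (i := r) (j := i + 1 + 1) (by omega) (by omega)]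
  have hrec₁ := hc.2 i (by omega)
  have hrec₂ := hc.2 r (by omega)
  have hsym₁ := hsym i (by omega)
  have hsym₂ := hsym r (by omega)
  rw [show i + 1 + r - i = r + 1 by omega] at hrec₁ hsym₁
  rw [show i + 1 + r - r = i + 1 by omega] at hrec₂ hsym₂
  exact ⟨c i - d i, by linear_combination b * hrec₂ + hrec₁ - b ^ 2 * hsym₁ - b * hsym₂⟩

theorem IsSym.dvd_digitsOfCarriesNum_rhoCarries (hp : IsPalintiple n b k d)
    (hc : IsCarries n b k d c) (hsym : IsSym k c) {bh : ℤ} (hbh : b ^ 2 - 1 ∣ n * bh - b)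
    (hcop : IsCoprime (b ^ 2 - 1) n) {j : ℕ} (hj : j ≤ k + 1) :
    b ^ 2 - 1 ∣ digitsOfCarriesNum b bh (k + 1) (rhoCarries k d) j := by
  refine hcop.dvd_of_dvd_mul_left ?_
  rw [digitsOfCarriesNum, show k + 1 + 1 - j = k + 2 - j by omega]
  convert dvd_sub (hbh.mul_right (b * rhoCarries k d (k + 2 - j) + rhoCarries k d (j + 1)))
    (hsym.dvd_rhoCarries hp hc hj) using 1
  ring

theorem isAsym_rhoCarries (hp : IsPalintiple n b k d) : IsAsym (k + 1) (rhoCarries k d) := by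
  refine ⟨fun hsym => hp.2.2.2.2.2.1 ?_, fun hshift => hp.not_palindrome_s6 fun j hj => ?_⟩
  · have h := hsym 0 (Nat.zero_le _)
    rwa [rhoCarries_zero, Nat.sub_zero,
      rhoCarries_of_add (i := 0) (j := k + 1) (by omega) (by omega), eq_comm] at h
  · have h := hshift (j + 1) (by omega)
    rwa [rhoCarries_of_add (i := k - j) (j := j + 1) (by omega) (by omega),
      rhoCarries_of_add (i := j) (j := k + 1 - (j + 1) + 1) (by omega) (by omega)] at h

end RhoCarries

theorem singly_rho_derived_from_1089_general (n b : ℤ) (k : ℕ) (d c : ℕ → ℤ)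
    (hp : IsPalintiple n b k d) (hc : IsCarries n b k d c)
    (hsym : IsSym k c)
    (hgcd : Int.gcd n (b ^ 2 - 1) = 1)
    (m : ℤ) (hm : n * m ≡ 1 [ZMOD b ^ 2 - 1])
    (l : ℤ) (hl : l = m * b % (b ^ 2 - 1)) :
    ∀ bh : ℤ, l < bh → bh ≡ l [ZMOD b ^ 2 - 1] →
      ∃ dh ch : ℕ → ℤ,
        IsPalintiple b bh (k + 1) dh ∧ IsCarries b bh (k + 1) dh ch ∧
        IsAsym (k + 1) ch ∧
        ch 0 = 0 ∧ (∀ j, 1 ≤ j → j ≤ k + 1 → ch j = d (k + 1 - j)) ∧ ch (k + 2) = 0 := by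
  intro bh hlbh hbhl
  have hb : 1 < b := by linarith [hp.1, hp.2.1]
  have hbh : b ^ 2 - 1 ≤ bh := by
    have hl0 : 0 ≤ l := hl ▸ Int.emod_nonneg _ (by nlinarith)
    have := Int.le_of_dvd (by omega) hbhl.symm.dvd
    omega
  have hkey : n * bh ≡ b [ZMOD b ^ 2 - 1] :=
    calc n * bh ≡ n * (m * b) [ZMOD b ^ 2 - 1] :=
          (hbhl.trans (hl ▸ Int.mod_modEq _ _)).mul_left n
      _ = n * m * b := by ring
      _ ≡ 1 * b [ZMOD b ^ 2 - 1] := hm.mul_right b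
      _ = b := one_mul b
  have hcop : IsCoprime (b ^ 2 - 1) n := (Int.isCoprime_iff_gcd_eq_one.2 hgcd).symm
  obtain ⟨hpal, hcar⟩ := isPalintiple_digitsOfCarries (B := bh) (K := k + 1) hb hbh
    (Nat.le_add_left 1 k) rhoCarries_zero (rhoCarries_of_lt (by omega)) hp.rhoCarries_one_pos
    hp.rhoCarries_mem (fun x hx => hp.rhoCarries_ne_pred_of_eq_zero hc hx)
    (fun j hj => hsym.dvd_digitsOfCarriesNum_rhoCarries hp hc hkey.symm.dvd hcop hj)
  exact ⟨_, _, hpal, hcar, isAsym_rhoCarries hp, rhoCarries_zero,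
    fun j hj1 hj => rhoCarries_of_add (by omega) hj1, rhoCarries_of_lt (by omega)⟩

/-- **Theorem (ρ-Hoey palintiples).** Singly-ρ-derived palintiples constructed from a
1089 `(n,b)`-palintiple with `gcd(n, b²-1) = 1`, with carry sequence
`(d 0, d 1, ..., d k, 0)`. -/
theorem singly_rho_derived_from_1089 (n b : ℤ) (k : ℕ) (d c : ℕ → ℤ)
    (hp : IsPalintiple n b k d) (hc : IsCarries n b k d c)
    (hsym : IsSym k c) (hdvd : n + 1 ∣ b)
    (hgcd : Int.gcd n (b ^ 2 - 1) = 1)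
    (m : ℤ) (hm : n * m ≡ 1 [ZMOD b ^ 2 - 1])
    (l : ℤ) (hl : l = m * b % (b ^ 2 - 1)) :
    ∀ bh : ℤ, l < bh → bh ≡ l [ZMOD b ^ 2 - 1] →
      ∃ dh ch : ℕ → ℤ,
        IsPalintiple b bh (k + 1) dh ∧ IsCarries b bh (k + 1) dh ch ∧
        IsAsym (k + 1) ch ∧
        ch 0 = 0 ∧ (∀ j, 1 ≤ j → j ≤ k + 1 → ch j = d (k + 1 - j)) ∧ ch (k + 2) = 0 :=
  singly_rho_derived_from_1089_general n b k d c hp hc hsym hgcd m hm l hl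
end

section
/- Let (d_1, d_0) be a 2-digit (n,b)-palintiple with nonzero carry c (so its carries are (c_2, c_1, c_0) = (0, c, 0) with c ≠ 0), and let D = gcd(d_1, b²−1). If n²−1 divides D·c, with quotient q = D·c/(n²−1), and gcd(d_0, D) divides q, then there exist an integer α ≥ 1 and an asymmetric 4-digit (b, b̂)-palintiple with b̂ = α(b²−1)/D whose carries ĉ_0, ..., ĉ_4 satisfy ĉ_0 = 0, ĉ_1 = d_1, ĉ_2 = d_0, ĉ_3 = 0, ĉ_4 = 0 (carry sequence (0, d_0, d_1, 0)). -/
open Finset Polynomial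

/-!
The carry recurrence of a 4-digit `(b, b̂)`-palintiple with carries `(0, x, y, 0)` forces
the digits to be `(u, v, b v + y, b u)` with `(b² - 1) u = b̂ x` and
`(b² - 1) v + b y + x = b̂ y`. For `x = d₁`, `y = d₀`, `b̂ = α (b² - 1) / D` and `d₁ = D m`
the first equation gives `u = α m`; since `D (b d₀ + d₁) = (b² - 1) q` the second one becomes
`D v = α d₀ - q`, a linear congruence for `α` modulo `D`, solvable because `gcd(d₀, D) ∣ q`.
Its solutions can be taken as large as we like, and a large `α` makes `b̂` large enough for
all four digits to fit.
-/

theorem IsCarries.sum_digits_eq {n b : ℤ} {k : ℕ} {d c : ℕ → ℤ} (hc : IsCarries n b k d c)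
    (hck : c (k + 1) = 0) :
    ∑ j ∈ range (k + 1), d j * b ^ j = n * ∑ j ∈ range (k + 1), d (k - j) * b ^ j := by
  have hrow : ∀ j ∈ range (k + 1),
      d j * b ^ j = n * (d (k - j) * b ^ j) - (c (j + 1) * b ^ (j + 1) - c j * b ^ j) := by
    intro j hj
    rw [pow_succ]
    linear_combination -b ^ j * hc.2 j (Nat.lt_succ_iff.1 (mem_range.1 hj))
  rw [sum_congr rfl hrow, sum_sub_distrib, ← mul_sum,
    sum_range_sub (fun j => c j * b ^ j), hck, hc.1]
  ring

theorem IsCarries.two_digit_eqs {n b : ℤ} {d c : ℕ → ℤ} (hc : IsCarries n b 1 d c)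
    (hc2 : c 2 = 0) : n * d 1 = d 0 + b * c 1 ∧ n * d 0 + c 1 = d 1 := by
  obtain ⟨hc0, hrec⟩ := hc
  constructor
  · simpa [hc0] using hrec 0 zero_le_one
  · simpa [hc2] using hrec 1 le_rfl

theorem IsPalintiple.two_digit_ne {n b : ℤ} {d : ℕ → ℤ} (hp : IsPalintiple n b 1 d) :
    d 1 ≠ d 0 := by
  obtain ⟨hn, hnb, -, -, -, hd0, hsum⟩ := hp
  intro h
  simp only [sum_range_succ, sum_range_zero, h] at hsum
  have : (n - 1) * (d 0 * (b + 1)) = 0 := by linear_combination -hsum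
  rcases mul_eq_zero.1 this with hn1 | hd0b
  · linarith
  · exact hd0 (by nlinarith)

theorem two_digit_carry_pos {n b : ℤ} {d c : ℕ → ℤ} (hp : IsPalintiple n b 1 d)
    (hc : IsCarries n b 1 d c) (hc2 : c 2 = 0) : 0 < c 1 := by
  obtain ⟨hn, hnb, -, hdig, -, hd0, -⟩ := hp
  obtain ⟨h1, h0⟩ := hc.two_digit_eqs hc2
  have hd0pos : 0 < d 0 := lt_of_le_of_ne (hdig 0 zero_le_one).1 (Ne.symm hd0)
  -- eliminating `d 1` from the two carry equations
  have hF : (n ^ 2 - 1) * d 0 = (b - n) * c 1 := by linear_combination h1 + n * h0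
  have : 0 < (b - n) * c 1 := hF ▸ mul_pos (by nlinarith) hd0pos
  exact pos_of_mul_pos_right this (by linarith)

theorem Int.exists_ge_mul_modEq {a D q : ℤ} (h : (Int.gcd a D : ℤ) ∣ q) (hD : D ≠ 0) (N : ℤ) :
    ∃ α, N ≤ α ∧ α * a ≡ q [ZMOD D] := by
  obtain ⟨w, rfl⟩ := h
  have hx : Int.gcdA a D * w * a ≡ Int.gcd a D * w [ZMOD D] := by
    rw [Int.gcd_eq_gcd_ab, Int.modEq_iff_dvd]
    exact ⟨Int.gcdB a D * w, by ring⟩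
  set x := Int.gcdA a D * w
  refine ⟨N + (x - N) % D, le_add_of_nonneg_right (Int.emod_nonneg _ hD), ?_⟩
  have hα : N + (x - N) % D ≡ x [ZMOD D] := by
    simpa using ((Int.mod_modEq (x - N) D).add_left N)
  exact (hα.mul_right a).trans hx

section QuadDigits

variable {b bh u v x y : ℤ}

def quadDigits (b u v y : ℤ) : ℕ → ℤ
  | 0 => u
  | 1 => v
  | 2 => b * v + y
  | 3 => b * u
  | _ => 0

def doubleCarries (x y : ℤ) : ℕ → ℤ
  | 1 => x
  | 2 => y
  | _ => 0

theorem isCarries_quadDigits (hu : (b ^ 2 - 1) * u = bh * x)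
    (hv : (b ^ 2 - 1) * v + b * y + x = bh * y) :
    IsCarries b bh 3 (quadDigits b u v y) (doubleCarries x y) := by
  refine ⟨rfl, fun j hj => ?_⟩
  interval_cases j
  · simp only [quadDigits, doubleCarries]; linear_combination hu
  · simp only [quadDigits, doubleCarries]; linear_combination hv
  · simp only [quadDigits, doubleCarries]; ring
  · simp only [quadDigits, doubleCarries]; ring

theorem isPalintiple_quadDigits (hb : 1 < b) (hbh : b < bh) (hu : 0 < u) (hv : 0 ≤ v)
    (hy : 0 ≤ y) (hbu : b * u ≤ bh - 1) (hbv : b * v + y ≤ bh - 1)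
    (hcar : IsCarries b bh 3 (quadDigits b u v y) (doubleCarries x y)) :
    IsPalintiple b bh 3 (quadDigits b u v y) := by
  have hu_le : u ≤ b * u := le_mul_of_one_le_left hu.le hb.le
  have hv_le : v ≤ b * v + y := by nlinarith
  refine ⟨hb, hbh, by norm_num, fun j hj => ?_, by simp only [quadDigits]; positivity,
    hu.ne', hcar.sum_digits_eq rfl⟩
  interval_cases j <;> simp only [quadDigits] <;> constructor <;> first | positivity | omega

theorem isAsym_doubleCarries (hx : x ≠ 0) (hxy : x ≠ y) : IsAsym 3 (doubleCarries x y) :=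
  ⟨fun h => hxy (h 1 (by norm_num)), fun h => hx (h 1 (by norm_num))⟩

end QuadDigits

theorem isPalintiple_doublyDerived {n b D e m q α w : ℤ} {d c : ℕ → ℤ}
    (hp : IsPalintiple n b 1 d) (hc : IsCarries n b 1 d c) (hc2 : c 2 = 0)
    (hD : 0 < D) (hm : d 1 = D * m) (he : D * e = b ^ 2 - 1)
    (hq : q * (n ^ 2 - 1) = D * c 1) (hα : D * (d 0 + 1) + q ≤ α)
    (hw : α * d 0 - q = D * w) :
    IsPalintiple b (α * e) 3 (quadDigits b (α * m) w (d 0)) ∧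
      IsCarries b (α * e) 3 (quadDigits b (α * m) w (d 0)) (doubleCarries (d 1) (d 0)) := by
  have hc1 := two_digit_carry_pos hp hc hc2
  obtain ⟨hn, hnb, -, hdig, -, hd0, -⟩ := hp
  obtain ⟨h1, h0⟩ := hc.two_digit_eqs hc2
  have hd0pos : 0 < d 0 := lt_of_le_of_ne (hdig 0 zero_le_one).1 (Ne.symm hd0)
  have hd0le := (hdig 0 zero_le_one).2
  have hd1le := (hdig 1 le_rfl).2
  have hqpos : 0 < q := pos_of_mul_pos_left (hq ▸ mul_pos hD hc1) (by nlinarith)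
  have hmpos : 0 < m := by nlinarith
  have hDb : D ≤ b - 1 := by nlinarith [le_mul_of_one_le_right hD.le hmpos]
  have he_gt : b < e := by
    refine lt_of_mul_lt_mul_left ?_ hD.le
    nlinarith [mul_le_mul_of_nonneg_right hDb (by linarith : (0 : ℤ) ≤ b + 1)]
  have hαpos : 0 < α := by nlinarith
  have hwpos : 0 ≤ w := by nlinarith
  have hrev : D * (b * d 0 + d 1) = (b ^ 2 - 1) * q := by
    refine mul_left_cancel₀ (show n ^ 2 - 1 ≠ 0 by nlinarith) ?_
    linear_combination D * ((b + n) * h1 + (n * b + 1) * h0) - (b ^ 2 - 1) * hq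
  have hcar : IsCarries b (α * e) 3 (quadDigits b (α * m) w (d 0)) (doubleCarries (d 1) (d 0)) :=
    isCarries_quadDigits (by linear_combination -(α * e) * hm - α * m * he)
      (mul_left_cancel₀ hD.ne' (by linear_combination -(b ^ 2 - 1) * hw + hrev - α * d 0 * he))
  have hαe : D * (α * e) = α * (b ^ 2 - 1) := by rw [← he]; ring
  have hαb : 0 ≤ α * b := mul_nonneg hαpos.le (by linarith)
  refine ⟨isPalintiple_quadDigits (by linarith) (by nlinarith) (by positivity) hwpos hd0pos.le
    ?_ ?_ hcar, hcar⟩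
  · refine le_of_mul_le_mul_left ?_ hD
    have hbu : D * (b * (α * m)) = α * b * d 1 := by rw [hm]; ring
    nlinarith [mul_le_mul_of_nonneg_left hd1le hαb]
  · refine le_of_mul_le_mul_left ?_ hD
    have hbv : D * (b * w + d 0) = b * (α * d 0 - q) + D * d 0 := by rw [hw]; ring
    nlinarith [mul_le_mul_of_nonneg_left hd0le hαb]

theorem asym_existence_doubly_rho_derived_general (n b : ℤ) (d c : ℕ → ℤ)
    (hp : IsPalintiple n b 1 d) (hc : IsCarries n b 1 d c)
    (hc2 : c 2 = 0)
    (D : ℤ) (hD : D = Int.gcd (d 1) (b ^ 2 - 1))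
    (hdvd : n ^ 2 - 1 ∣ D * c 1)
    (q : ℤ) (hq : q = D * c 1 / (n ^ 2 - 1))
    (hgcd : (Int.gcd (d 0) D : ℤ) ∣ q) :
    ∃ α : ℤ, 1 ≤ α ∧
      ∃ dh ch : ℕ → ℤ,
        IsPalintiple b (α * ((b ^ 2 - 1) / D)) 3 dh ∧
        IsCarries b (α * ((b ^ 2 - 1) / D)) 3 dh ch ∧
        IsAsym 3 ch ∧
        ch 0 = 0 ∧ ch 1 = d 1 ∧ ch 2 = d 0 ∧ ch 3 = 0 ∧ ch 4 = 0 := by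
  have hd1 : d 1 ≠ 0 := hp.2.2.2.2.1
  have hDpos : 0 < D := hD ▸ Int.natCast_pos.2 (Int.gcd_pos_of_ne_zero_left _ hd1)
  obtain ⟨m, hm⟩ : D ∣ d 1 := hD ▸ Int.gcd_dvd_left _ _
  have he : D * ((b ^ 2 - 1) / D) = b ^ 2 - 1 :=
    Int.mul_ediv_cancel' (hD ▸ Int.gcd_dvd_right _ _)
  have hqE : q * (n ^ 2 - 1) = D * c 1 := hq ▸ Int.ediv_mul_cancel hdvd
  obtain ⟨α, hαN, hα⟩ := Int.exists_ge_mul_modEq hgcd hDpos.ne' (max 1 (D * (d 0 + 1) + q))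
  obtain ⟨w, hw⟩ := hα.symm.dvd
  obtain ⟨hpal, hcar⟩ :=
    isPalintiple_doublyDerived hp hc hc2 hDpos hm he hqE (le_of_max_le_right hαN) hw
  exact ⟨α, le_of_max_le_left hαN, _, _, hpal, hcar,
    isAsym_doubleCarries hd1 hp.two_digit_ne, rfl, rfl, rfl, rfl, rfl⟩

/-- **Corollary.** Asymmetric 4-digit palintiples doubly-ρ-derived from a 2-digit
`(n,b)`-palintiple `(d 1, d 0)` with nonzero carry `c 1`, carry sequence
`(0, d 0, d 1, 0)`. -/
theorem asym_existence_doubly_rho_derived (n b : ℤ) (d c : ℕ → ℤ)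
    (hp : IsPalintiple n b 1 d) (hc : IsCarries n b 1 d c)
    (hcne : c 1 ≠ 0) (hc2 : c 2 = 0)
    (D : ℤ) (hD : D = Int.gcd (d 1) (b ^ 2 - 1))
    (hdvd : n ^ 2 - 1 ∣ D * c 1)
    (q : ℤ) (hq : q = D * c 1 / (n ^ 2 - 1))
    (hgcd : (Int.gcd (d 0) D : ℤ) ∣ q) :
    ∃ α : ℤ, 1 ≤ α ∧
      ∃ dh ch : ℕ → ℤ,
        IsPalintiple b (α * ((b ^ 2 - 1) / D)) 3 dh ∧
        IsCarries b (α * ((b ^ 2 - 1) / D)) 3 dh ch ∧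
        IsAsym 3 ch ∧
        ch 0 = 0 ∧ ch 1 = d 1 ∧ ch 2 = d 0 ∧ ch 3 = 0 ∧ ch 4 = 0 :=
  asym_existence_doubly_rho_derived_general n b d c hp hc hc2 D hD hdvd q hq hgcd
end

section
/- Let (d_k, ..., d_0) be a 1089 (n,b)-palintiple (a symmetric (n,b)-palintiple with n+1 dividing b). Then its palinomial Pal(X) = Σ_{j=0}^{k} (d_j − n·d_{k−j})·X^j has at least one root on the complex unit circle: there exists z ∈ ℂ with |z| = 1 and Pal(z) = 0. -/
open Finset Polynomial

/-!
Expressing the digits through the carries gives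
`Pal(X) = (X - b) * ∑_{j < k} c_{j+1} X^j`. Write `b = (n + 1) m`. For a symmetric palintiple the
carry equations at positions `j` and `k - j` combine to `c_j ≡ m (c_{j-1} + c_{j+1}) (mod n - 1)`,
and with `c_0 = c_k = 0` and `m c_1 ≡ 0` this forces `n - 1 ∣ c_j`; since `0 ≤ c_j ≤ n - 1`, every
carry is `0` or `n - 1`. The second factor is therefore `n - 1` times a palindromic `0/1`
polynomial `p` of degree `k - 2`, and `p` is not a monomial. On `z = e^{2iφ}` we get
`p(z) = e^{i(k-2)φ} ∑_{m ∈ F} cos (m φ)` for a symmetric set `F` of integer frequencies containing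
some `a ≠ 0`. This cosine sum is positive at `0`. It is also nonpositive somewhere: its average
against the weight `1 - cos (a φ)` over the `N`-th roots of unity (`N` large) equals
`N (𝟙[0 ∈ F] - 1) ≤ 0`. Hence it vanishes somewhere.
-/

theorem sum_sub_mul_succ_mul_pow {R : Type*} [CommRing R] (b z : R) {c : ℕ → R} {k : ℕ}
    (h0 : c 0 = 0) (hk : c (k + 1) = 0) :
    ∑ j ∈ range (k + 1), (c j - b * c (j + 1)) * z ^ j =
      (z - b) * ∑ j ∈ range k, c (j + 1) * z ^ j := by
  have hshift : ∑ j ∈ range (k + 1), c j * z ^ j = z * ∑ j ∈ range k, c (j + 1) * z ^ j := by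
    rw [sum_range_succ', h0, mul_sum]
    simp only [zero_mul, add_zero, pow_succ]
    exact sum_congr rfl fun j _ => by ring
  have htrunc : ∑ j ∈ range (k + 1), c (j + 1) * z ^ j = ∑ j ∈ range k, c (j + 1) * z ^ j := by
    rw [sum_range_succ, hk, zero_mul, add_zero]
  simp only [sub_mul, sum_sub_distrib, mul_assoc, ← mul_sum, hshift, htrunc]

theorem pow_mul_eq_of_eq_mul_add {R : Type*} [CommRing R] {m : R} {y : ℕ → R} {T : ℕ}
    (h0 : m * y 0 = 0) (h1 : m * y 1 = y 0)
    (hrec : ∀ t, t + 2 ≤ T → y (t + 1) = m * (y t + y (t + 2))) :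
    ∀ t ≤ T, m ^ t * y t = y 0 := by
  intro t
  induction t using Nat.twoStepInduction with
  | zero => simp
  | one => exact fun _ => by simpa using h1
  | more t ih₀ ih₁ =>
    intro ht
    linear_combination (-m ^ (t + 1)) * hrec t ht + ih₁ (by omega) - m ^ 2 * ih₀ (by omega) - m * h0

theorem eq_zero_of_eq_mul_add {R : Type*} [CommRing R] {m : R} {x : ℕ → R} {k : ℕ}
    (h0 : x 0 = 0) (hk : x k = 0) (h1 : m * x 1 = 0)
    (hrec : ∀ j, j + 2 ≤ k → x (j + 1) = m * (x j + x (j + 2))) :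
    ∀ j ≤ k, x j = 0 := by
  have hprefix : ∀ i, i < k → x i = 0 ∧ m * x (i + 1) = 0 := by
    intro i
    induction i with
    | zero => exact fun _ => ⟨h0, h1⟩
    | succ i ih =>
      intro hi
      obtain ⟨hxi, hmx⟩ := ih (by omega)
      have hpow := pow_mul_eq_of_eq_mul_add (y := fun t => x (i + 1 + t)) (T := k - (i + 1))
        (by simpa using hmx) (by linear_combination (-1 : R) * hrec i (by omega) - m * hxi)
        (fun t ht => by simpa [add_assoc] using hrec (i + 1 + t) (by omega)) (k - (i + 1)) le_rfl
      have hxi1 : x (i + 1) = 0 := by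
        simpa [show i + 1 + (k - (i + 1)) = k by omega, hk] using hpow.symm
      exact ⟨hxi1, by linear_combination (-1 : R) * hrec i (by omega) + hxi1 - m * hxi⟩
  intro j hj
  rcases hj.lt_or_eq with hj | rfl
  · exact (hprefix j hj).1
  · exact hk

section

open Real

theorem sum_range_cos_int_mul (N : ℕ) (m : ℤ) (hm : |m| < N) :
    ∑ t ∈ range N, cos (m * (2 * π * t / N)) = if m = 0 then (N : ℝ) else 0 := by
  split_ifs with hm0
  · simp [hm0]
  have hζ := Complex.isPrimitiveRoot_exp N (by have := abs_nonneg m; omega)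
  set ζ := Complex.exp (2 * π * Complex.I / N)
  have hζm : ζ ^ m ≠ 1 := fun h =>
    hm0 (Int.eq_zero_of_abs_lt_dvd ((hζ.zpow_eq_one_iff_dvd m).mp h) hm)
  have hζmN : (ζ ^ m) ^ N = 1 := by
    rw [← zpow_natCast, ← zpow_mul, mul_comm, zpow_mul, zpow_natCast, hζ.pow_eq_one, one_zpow]
  have hterm : ∀ t : ℕ, cos (m * (2 * π * t / N)) = ((ζ ^ m) ^ t).re := by
    intro t
    rw [← Complex.exp_int_mul, ← Complex.exp_nat_mul, ← Complex.exp_ofReal_mul_I_re]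
    congr 2
    push_cast
    ring
  simp_rw [hterm, ← Complex.re_sum, geom_sum_eq hζm, hζmN, sub_self, zero_div, Complex.zero_re]

theorem sum_range_sum_cos_mul_one_sub_cos {F : Finset ℤ} {a : ℤ} {N : ℕ}
    (hN : ∀ m ∈ F, |m| + |a| < N) (haF : a ∈ F) (hnaF : -a ∈ F) :
    ∑ t ∈ range N, (∑ m ∈ F, cos (m * (2 * π * t / N))) * (1 - cos (a * (2 * π * t / N))) =
      N * ((if (0 : ℤ) ∈ F then 1 else 0) - 1) := by
  have hexpand : ∀ x : ℝ, (∑ m ∈ F, cos (m * x)) * (1 - cos (a * x)) =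
      ∑ m ∈ F, (cos (m * x) - cos ((m + a : ℤ) * x) / 2 - cos ((m - a : ℤ) * x) / 2) := by
    intro x
    rw [sum_mul]
    refine sum_congr rfl fun m _ => ?_
    push_cast
    rw [add_mul, sub_mul, cos_add, cos_sub]
    ring
  have havg : ∀ m ∈ F, ∑ t ∈ range N, (cos (m * (2 * π * t / N)) -
      cos ((m + a : ℤ) * (2 * π * t / N)) / 2 - cos ((m - a : ℤ) * (2 * π * t / N)) / 2) =
      N * ((if m = 0 then 1 else 0) - (if m = -a then 1 else 0) / 2 -
        (if m = a then 1 else 0) / 2) := by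
    intro m hm
    have hb := hN m hm
    rw [sum_sub_distrib, sum_sub_distrib, ← sum_div, ← sum_div,
      sum_range_cos_int_mul N m (by linarith [abs_nonneg a]),
      sum_range_cos_int_mul N _ (by linarith [abs_add_le m a]),
      sum_range_cos_int_mul N _ (by linarith [abs_sub m a])]
    simp only [add_eq_zero_iff_eq_neg, sub_eq_zero]
    split_ifs <;> ring
  simp_rw [hexpand]
  rw [sum_comm, sum_congr rfl havg, ← mul_sum, sum_sub_distrib, sum_sub_distrib, ← sum_div,
    ← sum_div, sum_ite_eq', sum_ite_eq', sum_ite_eq', if_pos haF, if_pos hnaF]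
  ring

theorem cos_lt_one_of_ne_zero_of_abs_lt {x : ℝ} (hx0 : x ≠ 0) (hx : |x| < 2 * π) : cos x < 1 :=
  lt_of_le_of_ne (cos_le_one x) fun h => hx0 <|
    (cos_eq_one_iff_of_lt_of_lt (neg_lt_of_abs_lt hx) (lt_of_abs_lt hx)).mp h

theorem exists_sum_cos_int_mul_nonpos {F : Finset ℤ} {a : ℤ} (ha : a ≠ 0) (haF : a ∈ F)
    (hnaF : -a ∈ F) : ∃ φ : ℝ, ∑ m ∈ F, cos (m * φ) ≤ 0 := by
  by_contra! hpos
  set N : ℕ := 2 * ∑ m ∈ F, m.natAbs + 1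
  have hN : ∀ m ∈ F, |m| + |a| < N := by
    intro m hm
    have h₁ := single_le_sum (f := fun m : ℤ => (m.natAbs : ℤ)) (by simp) hm
    have h₂ := single_le_sum (f := fun m : ℤ => (m.natAbs : ℤ)) (by simp) haF
    simp only [Int.natCast_natAbs] at h₁ h₂
    push_cast [N, Int.natCast_natAbs]
    linarith
  have haN : |a| < N := by linarith [hN a haF, abs_nonneg a]
  have hN1 : 1 < N := by have := abs_pos.mpr ha; omega
  have hcos : cos (a * (2 * π * (1 : ℕ) / N)) < 1 := by
    rw [Nat.cast_one, mul_one]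
    refine cos_lt_one_of_ne_zero_of_abs_lt (by positivity) ?_
    have haN' : |(a : ℝ)| < N := by rw [← Int.cast_abs]; exact_mod_cast haN
    rw [abs_mul, abs_of_pos (by positivity : 0 < 2 * π / N)]
    calc |(a : ℝ)| * (2 * π / N) < N * (2 * π / N) := by gcongr
      _ = 2 * π := by field_simp
  have hpos_sum : 0 < ∑ t ∈ range N,
      (∑ m ∈ F, cos (m * (2 * π * t / N))) * (1 - cos (a * (2 * π * t / N))) :=
    sum_pos' (fun t _ => mul_nonneg (hpos _).le (by linarith [cos_le_one (a * (2 * π * t / N))]))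
      ⟨1, mem_range.mpr hN1, mul_pos (hpos _) (by linarith)⟩
  rw [sum_range_sum_cos_mul_one_sub_cos hN haF hnaF] at hpos_sum
  have : (if (0 : ℤ) ∈ F then (1 : ℝ) else 0) ≤ 1 := by split_ifs <;> norm_num
  nlinarith [(N.cast_nonneg : (0 : ℝ) ≤ N)]

theorem exists_sum_cos_int_mul_eq_zero {F : Finset ℤ} {a : ℤ} (ha : a ≠ 0) (haF : a ∈ F)
    (hnaF : -a ∈ F) : ∃ φ : ℝ, ∑ m ∈ F, cos (m * φ) = 0 := by
  obtain ⟨φ₀, hφ₀⟩ := exists_sum_cos_int_mul_nonpos ha haF hnaF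
  have hcont : Continuous fun φ : ℝ => ∑ m ∈ F, cos (m * φ) := by fun_prop
  have h0 : (0 : ℝ) < ∑ m ∈ F, cos (m * 0) := by
    simpa using card_pos.mpr ⟨a, haF⟩
  obtain ⟨φ, -, hφ⟩ := intermediate_value_uIcc (a := φ₀) (b := 0) hcont.continuousOn
    (Set.mem_uIcc.mpr (Or.inl ⟨hφ₀, h0.le⟩))
  exact ⟨φ, hφ⟩

theorem sum_sin_int_mul_eq_zero {F : Finset ℤ} (hF : ∀ m ∈ F, -m ∈ F) (φ : ℝ) :
    ∑ m ∈ F, sin (m * φ) = 0 := by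
  have h : ∑ m ∈ F, sin (m * φ) = ∑ m ∈ F, sin ((-m : ℤ) * φ) :=
    sum_nbij' Neg.neg Neg.neg hF hF (by simp) (by simp) (by simp)
  simp only [Int.cast_neg, neg_mul, sin_neg, sum_neg_distrib] at h
  linarith

theorem exists_norm_eq_one_sum_pow_eq_zero {S : Finset ℕ} {D : ℕ}
    (hS : ∀ j ∈ S, j ≤ D ∧ D - j ∈ S) {j₀ : ℕ} (hj₀ : j₀ ∈ S) (hj₀D : 2 * j₀ ≠ D) :
    ∃ z : ℂ, ‖z‖ = 1 ∧ ∑ j ∈ S, z ^ j = 0 := by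
  set f : ℕ → ℤ := fun j => 2 * j - D
  have hf : Set.InjOn f S := fun i _ j _ h => by simp only [f] at h; omega
  have hneg : ∀ j ∈ S, -f j = f (D - j) := fun j hj => by
    have := (hS j hj).1; simp only [f]; omega
  obtain ⟨φ, hφ⟩ := exists_sum_cos_int_mul_eq_zero (F := S.image f) (a := f j₀)
    (by simp only [f]; omega) (mem_image_of_mem f hj₀)
    (hneg j₀ hj₀ ▸ mem_image_of_mem f (hS j₀ hj₀).2)
  have hsin := sum_sin_int_mul_eq_zero (F := S.image f) (by
    simp only [mem_image, forall_exists_index, and_imp, forall_apply_eq_imp_iff₂]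
    exact fun j hj => ⟨D - j, (hS j hj).2, (hneg j hj).symm⟩) φ
  refine ⟨Complex.exp (↑(2 * φ) * Complex.I), Complex.norm_exp_ofReal_mul_I _, ?_⟩
  have hpow : ∀ j ∈ S, Complex.exp (↑(2 * φ) * Complex.I) ^ j =
      Complex.exp (↑(D * φ) * Complex.I) * Complex.exp (↑(f j * φ) * Complex.I) := by
    intro j hj
    rw [← Complex.exp_nat_mul, ← Complex.exp_add]
    congr 1
    push_cast [f, Nat.cast_sub (hS j hj).1]
    ring
  rw [sum_congr rfl hpow, ← mul_sum,
    ← sum_image (f := fun m : ℤ => Complex.exp (↑(m * φ) * Complex.I)) hf]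
  simp only [Complex.exp_mul_I, ← Complex.ofReal_cos, ← Complex.ofReal_sin, sum_add_distrib,
    ← sum_mul, ← Complex.ofReal_sum, hφ, hsin]
  simp

end

namespace IsCarries

variable {n b : ℤ} {k : ℕ} {d c : ℕ → ℤ}

theorem palinomial_eq {R : Type*} [CommRing R] (hc : IsCarries n b k d c) (hk : c (k + 1) = 0)
    (z : R) :
    ∑ j ∈ range (k + 1), ((d j : R) - n * d (k - j)) * z ^ j =
      (z - b) * ∑ j ∈ range k, (c (j + 1) : R) * z ^ j := by
  rw [← sum_sub_mul_succ_mul_pow (b : R) z (c := fun j => (c j : R)) (by simp [hc.1])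
    (by simp [hk])]
  refine sum_congr rfl fun j hj => ?_
  have := congrArg (Int.cast : ℤ → R) (hc.2 j (Nat.lt_succ_iff.mp (mem_range.mp hj)))
  push_cast at this
  congr 1
  linear_combination -this

theorem carry_succ_eq_zero (hp : IsPalintiple n b k d) (hc : IsCarries n b k d c) :
    c (k + 1) = 0 := by
  obtain ⟨hn, hnb, -, -, -, -, hsum⟩ := hp
  have htel := sum_range_sub (fun j => c j * b ^ j) (k + 1)
  have hstep : ∀ j ∈ range (k + 1),
      c (j + 1) * b ^ (j + 1) - c j * b ^ j = n * d (k - j) * b ^ j - d j * b ^ j := by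
    intro j hj
    have := hc.2 j (Nat.lt_succ_iff.mp (mem_range.mp hj))
    linear_combination (-b ^ j) * this
  rw [sum_congr rfl hstep, sum_sub_distrib, hc.1] at htel
  simp only [mul_assoc, ← mul_sum, ← hsum, sub_self, zero_mul, sub_zero] at htel
  exact (mul_eq_zero.mp htel.symm).resolve_right (pow_ne_zero _ (by linarith))

theorem mem_Icc (hp : IsPalintiple n b k d) (hc : IsCarries n b k d c) :
    ∀ j ≤ k + 1, c j ∈ Set.Icc 0 (n - 1) := by
  obtain ⟨hn, hnb, -, hdig, -⟩ := hp
  intro j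
  induction j with
  | zero => exact fun _ => ⟨hc.1.ge, hc.1.le.trans (by linarith)⟩
  | succ j ih =>
    intro hj
    obtain ⟨hcj₀, hcj₁⟩ := ih (by omega)
    obtain ⟨hdj₀, hdj₁⟩ := hdig j (by omega)
    obtain ⟨hdk₀, hdk₁⟩ := hdig (k - j) (by omega)
    have h := hc.2 j (by omega)
    constructor
    · by_contra! hneg
      nlinarith
    · by_contra! hbig
      nlinarith

theorem sub_one_dvd (hn : 1 < n) (hc : IsCarries n b k d c) (hsym : IsSym k c)
    (hk : c (k + 1) = 0) (hdvd : n + 1 ∣ b) : ∀ j ≤ k, n - 1 ∣ c j := by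
  obtain ⟨m, rfl⟩ := hdvd
  have hn1 : n + 1 ≠ 0 := by linarith
  have hck : c k = 0 := by simpa [hc.1] using (hsym 0 k.zero_le).symm
  have hfirst : (n - 1) * d 0 = m * c 1 := by
    have h₀ := hc.2 0 k.zero_le
    have hₖ := hc.2 k le_rfl
    simp only [Nat.sub_zero, Nat.sub_self, hc.1, hck, hk] at h₀ hₖ
    exact mul_left_cancel₀ hn1 (by linear_combination h₀ + n * hₖ)
  have hstep : ∀ j, j + 2 ≤ k →
      (n - 1) * d (k - (j + 1)) = m * (c j + n * c (j + 2)) - c (j + 1) := by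
    intro j hj
    have h₁ := hc.2 (j + 1) (by omega)
    have h₂ := hc.2 (k - (j + 1)) (by omega)
    rw [show k - (k - (j + 1)) = j + 1 by omega, ← hsym (j + 1) (by omega),
      show k - (j + 1) + 1 = k - j by omega, ← hsym j (by omega)] at h₂
    exact mul_left_cancel₀ hn1 (by linear_combination n * h₁ + h₂)
  have hnR : (n : ZMod (n - 1).natAbs) = 1 := by
    have := (ZMod.intCast_zmod_eq_zero_iff_dvd (n - 1) (n - 1).natAbs).mpr
      (Int.natAbs_dvd.mpr dvd_rfl)
    push_cast at this
    exact sub_eq_zero.mp this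
  have hzero := eq_zero_of_eq_mul_add (R := ZMod (n - 1).natAbs) (x := fun j => (c j : _))
    (m := (m : _)) (k := k) (by simp [hc.1]) (by simp [hck])
    (by
      have := congrArg (Int.cast : ℤ → ZMod (n - 1).natAbs) hfirst
      push_cast at this
      simpa [hnR] using this.symm)
    (fun j hj => by
      have := congrArg (Int.cast : ℤ → ZMod (n - 1).natAbs) (hstep j hj)
      push_cast at this
      linear_combination this + ((m : ZMod (n - 1).natAbs) * c (j + 2) - d (k - (j + 1))) * hnR)
  intro j hj
  rw [← Int.natAbs_dvd, ← ZMod.intCast_zmod_eq_zero_iff_dvd]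
  exact hzero j hj

theorem eq_zero_or_eq_sub_one (hp : IsPalintiple n b k d) (hc : IsCarries n b k d c)
    (hsym : IsSym k c) (hdvd : n + 1 ∣ b) : ∀ j ≤ k, c j = 0 ∨ c j = n - 1 := by
  intro j hj
  obtain ⟨t, ht⟩ := hc.sub_one_dvd hp.1 hsym (hc.carry_succ_eq_zero hp) hdvd j hj
  obtain ⟨h₀, h₁⟩ := hc.mem_Icc hp j (by omega)
  have hn : 0 < n - 1 := by linarith [hp.1]
  have ht₀ : 0 ≤ t := by nlinarith
  have ht₁ : t ≤ 1 := by nlinarith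
  interval_cases t <;> simp [ht]

theorem carry_one_ne_zero (hp : IsPalintiple n b k d) (hc : IsCarries n b k d c)
    (hck : c k = 0) (hk : c (k + 1) = 0) : c 1 ≠ 0 := by
  obtain ⟨hn, -, -, -, hdk, -⟩ := hp
  intro hc1
  have h₀ := hc.2 0 k.zero_le
  have hₖ := hc.2 k le_rfl
  simp only [Nat.sub_zero, Nat.sub_self, hc.1, hc1, hck, hk, mul_zero, add_zero] at h₀ hₖ
  have : ((n - 1) * (n + 1)) * d k = 0 := by linear_combination n * h₀ + hₖ
  exact hdk ((mul_eq_zero.mp this).resolve_left (mul_ne_zero (by linarith) (by linarith)))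

theorem three_le_of_carry_one_ne_zero (hp : IsPalintiple n b k d) (hc : IsCarries n b k d c)
    (hck : c k = 0) (hc1 : c 1 ≠ 0) : 3 ≤ k := by
  have hc1_nonneg : 0 ≤ c 1 := (hc.mem_Icc hp 1 (by omega)).1
  obtain ⟨hn, -, hk1, hdig, -⟩ := hp
  by_contra! hk3
  interval_cases k
  · exact hc1 hck
  · have h₁ := hc.2 1 (by norm_num)
    have hd1 := (hdig 1 (by norm_num)).1
    simp only [hck, mul_zero, add_zero] at h₁
    have hc1_pos : 0 < c 1 := lt_of_le_of_ne hc1_nonneg (Ne.symm hc1)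
    nlinarith

end IsCarries

/-- **Theorem.** Palinomials induced by 1089 palintiples have at least one root on the
unit circle. -/
theorem palinomial_root_on_unit_circle (n b : ℤ) (k : ℕ) (d c : ℕ → ℤ)
    (hp : IsPalintiple n b k d) (hc : IsCarries n b k d c)
    (hsym : IsSym k c) (hdvd : n + 1 ∣ b) :
    ∃ z : ℂ, ‖z‖ = 1 ∧
      ∑ j ∈ range (k + 1), ((d j : ℂ) - (n : ℂ) * (d (k - j) : ℂ)) * z ^ j = 0 := by
  have hk := hc.carry_succ_eq_zero hp
  have hck : c k = 0 := by simpa [hc.1] using (hsym 0 k.zero_le).symm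
  have hc1 := hc.carry_one_ne_zero hp hck hk
  have hk3 := hc.three_le_of_carry_one_ne_zero hp hck hc1
  have hcar := hc.eq_zero_or_eq_sub_one hp hsym hdvd
  set S := (range k).filter fun j => c (j + 1) ≠ 0
  have hS : ∀ j ∈ S, j ≤ k - 2 ∧ k - 2 - j ∈ S := by
    intro j hj
    obtain ⟨hjk, hcj⟩ := mem_filter.mp hj
    rw [mem_range] at hjk
    have : j + 1 ≠ k := fun h => hcj (h ▸ hck)
    refine ⟨by omega, mem_filter.mpr ⟨mem_range.mpr (by omega), ?_⟩⟩
    rwa [show k - 2 - j + 1 = k - (j + 1) by omega, ← hsym (j + 1) (by omega)]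
  obtain ⟨z, hz, hzS⟩ := exists_norm_eq_one_sum_pow_eq_zero hS (j₀ := 0)
    (mem_filter.mpr ⟨mem_range.mpr (by omega), hc1⟩) (by omega)
  refine ⟨z, hz, ?_⟩
  have hcarries : ∑ j ∈ range k, (c (j + 1) : ℂ) * z ^ j = (n - 1) * ∑ j ∈ S, z ^ j := by
    rw [mul_sum, sum_filter]
    refine sum_congr rfl fun j hj => ?_
    split_ifs with h
    · rw [(hcar (j + 1) (mem_range.mp hj)).resolve_left h]; push_cast; ring
    · simp [not_not.mp h]
  rw [hc.palinomial_eq hk, hcarries, hzS, mul_zero, mul_zero]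
end

section
/- Let (d_k, ..., d_0) be a 1089 (n,b)-palintiple (a symmetric (n,b)-palintiple with n+1 dividing b). Then its digit polynomial D(X) = Σ_{j=0}^{k} d_j·X^j and its reverse-digit polynomial R(X) = Σ_{j=0}^{k} d_{k−j}·X^j each have at least one root on the complex unit circle: there exist z, w ∈ ℂ with |z| = |w| = 1, D(z) = 0, and R(w) = 0. -/
open Finset Polynomial

/-!
Reading the carry recurrence as an identity of polynomials gives
`z (D z - n R z) = (z - b) C z` for the carry polynomial `C z = ∑ c_j z^j`; reversing coefficients
and using the symmetry of the carries gives `n D z - R z = (b z - 1) C z`. As `n² ≠ 1`, a nonzero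
root of `C` is a common root of `D` and `R`, so it suffices to find a root of the palindromic
polynomial `C` on the unit circle. For odd `k` this is `-1`. For `k = 2m`, `e^{-imθ} C(e^{iθ})` is
the real cosine sum `f θ = ∑ c_j cos ((j - m) θ)`, and `f 0 = ∑ c_j ≥ 0`. Averaging `f (1 - cos)`
over the `(2m+1)`-st roots of unity gives `(2m+1) (c_m - c_{m+1})`, which is `≤ 0` because the
carries of a 1089 palintiple are all divisible by `n - 1`, hence are `0` or `n - 1`. So `f` takes a
value `≤ 0`, and vanishes somewhere by the intermediate value theorem.
-/

def coeffEval {R : Type*} [CommRing R] (k : ℕ) (a : ℕ → ℤ) (z : R) : R :=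
  ∑ j ∈ range (k + 1), (a j : R) * z ^ j

section CommRing

variable {R : Type*} [CommRing R] {k : ℕ}

theorem coeffEval_congr {a a' : ℕ → ℤ} (h : ∀ j ≤ k, a j = a' j) (z : R) :
    coeffEval k a z = coeffEval k a' z :=
  sum_congr rfl fun j hj => by rw [h j (Nat.le_of_lt_succ (mem_range.mp hj))]

theorem sum_range_mul_pow_succ (a : ℕ → ℤ) (z : R) :
    ∑ j ∈ range (k + 1), (a (j + 1) : R) * z ^ (j + 1) =
      coeffEval k a z - a 0 + a (k + 1) * z ^ (k + 1) := by
  have h := sum_range_succ' (fun j => (a j : R) * z ^ j) (k + 1)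
  rw [sum_range_succ] at h
  simp only [pow_zero, mul_one] at h
  rw [coeffEval]
  linear_combination -h

variable {n b : ℤ} {d c : ℕ → ℤ}

theorem IsCarries.mul_coeffEval_sub (hc : IsCarries n b k d c) (z : R) :
    z * (coeffEval k d z - n * coeffEval k (fun j => d (k - j)) z) =
      (z - b) * coeffEval k c z - b * c (k + 1) * z ^ (k + 1) := by
  obtain ⟨hc0, hrec⟩ := hc
  calc z * (coeffEval k d z - n * coeffEval k (fun j => d (k - j)) z)
      = ∑ j ∈ range (k + 1), ((c j : R) * z ^ (j + 1) - b * ((c (j + 1) : R) * z ^ (j + 1))) := by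
        rw [coeffEval, coeffEval, mul_sub, mul_sum, mul_sum, mul_sum, ← sum_sub_distrib]
        refine sum_congr rfl fun j hj => ?_
        have h := congrArg (Int.cast : ℤ → R) (hrec j (Nat.le_of_lt_succ (mem_range.mp hj)))
        push_cast at h
        linear_combination (-z ^ (j + 1)) * h
    _ = (z - b) * coeffEval k c z - b * c (k + 1) * z ^ (k + 1) := by
        have h : ∑ j ∈ range (k + 1), (c j : R) * z ^ (j + 1) = z * coeffEval k c z := by
          rw [coeffEval, mul_sum]
          exact sum_congr rfl fun j _ => by ring
        rw [sum_sub_distrib, ← mul_sum, sum_range_mul_pow_succ, hc0, h, Int.cast_zero]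
        ring

end CommRing

section Divisibility

variable {q r : ℤ} {k : ℕ}

theorem Prime.dvd_of_dvd_recurrence {p : ℤ} (hp : Prime p) {x : ℕ → ℤ} (hx0 : x 0 = 0)
    (hxk : x (k + 1) = 0) (h : ∀ j ≤ k, p ∣ q * (x (j + 1) + r * x (j - 1)) - x j) :
    ∀ j ≤ k + 1, p ∣ x j := by
  by_cases hpq : p ∣ q
  · rintro (_ | j) hj
    · simp [hx0]
    · rcases (Nat.le_of_succ_le_succ hj).eq_or_lt with rfl | hjk
      · simp [hxk]
      · simpa using dvd_sub (hpq.mul_right (x (j + 2) + r * x j)) (h (j + 1) hjk)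
  · -- `q` is invertible mod `p`, so the recurrence determines `x (j + 1)` mod `p` from the two
    -- preceding terms.
    have step : ∀ j ≤ k, p ∣ x j ∧ p ∣ x (j + 1) := by
      intro j
      induction j with
      | zero => intro _; simpa [hx0, hp.dvd_mul, hpq] using h 0 (Nat.zero_le k)
      | succ i ih =>
        intro hi
        obtain ⟨hxi, hxi1⟩ := ih (by omega)
        have hprod : p ∣ q * x (i + 2) := by
          have e : q * x (i + 2) = (q * (x (i + 1 + 1) + r * x (i + 1 - 1)) - x (i + 1)) +
              (x (i + 1) - q * r * x i) := by
            rw [Nat.add_sub_cancel]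
            ring
          rw [e]
          exact (h (i + 1) hi).add (hxi1.sub (hxi.mul_left (q * r)))
        exact ⟨hxi1, (hp.dvd_mul.mp hprod).resolve_left hpq⟩
    rintro (_ | j) hj
    · exact (step 0 (Nat.zero_le k)).1
    · exact (step j (by omega)).2

theorem dvd_of_dvd_recurrence {s : ℤ} (hs : s ≠ 0) {x : ℕ → ℤ} (hx0 : x 0 = 0)
    (hxk : x (k + 1) = 0) (h : ∀ j ≤ k, s ∣ q * (x (j + 1) + r * x (j - 1)) - x j) :
    ∀ j ≤ k + 1, s ∣ x j := by
  induction s using UniqueFactorizationMonoid.induction_on_prime generalizing x with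
  | h₁ => exact absurd rfl hs
  | h₂ u hu => exact fun j _ => hu.dvd
  | h₃ a p ha hp ih =>
    have hax := ih ha hx0 hxk fun j hj => (Dvd.intro_left p rfl).trans (h j hj)
    set y : ℕ → ℤ := fun j => x j / a
    have hxy : ∀ j ≤ k + 1, x j = y j * a := fun j hj => (Int.ediv_mul_cancel (hax j hj)).symm
    have hpy := hp.dvd_of_dvd_recurrence (x := y) (q := q) (r := r) (k := k)
      (by simp [y, hx0]) (by simp [y, hxk]) fun j hj => by
        rw [← mul_dvd_mul_iff_right ha]
        have e : (q * (y (j + 1) + r * y (j - 1)) - y j) * a =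
            q * (x (j + 1) + r * x (j - 1)) - x j := by
          rw [hxy j (by omega), hxy (j + 1) (by omega), hxy (j - 1) (by omega)]
          ring
        exact e ▸ h j hj
    intro j hj
    rw [hxy j hj]
    exact mul_dvd_mul (hpy j hj) dvd_rfl

end Divisibility

section Carries

variable {n b : ℤ} {k : ℕ} {d c : ℕ → ℤ}

theorem IsCarries.carry_succ_eq_zero_s13 (hc : IsCarries n b k d c) (hp : IsPalintiple n b k d) :
    c (k + 1) = 0 := by
  obtain ⟨hn, hnb, -, -, -, -, heq⟩ := hp
  have h := hc.mul_coeffEval_sub b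
  simp only [coeffEval, Int.cast_id, heq, sub_self, mul_zero, zero_mul, zero_sub] at h
  have hb : b ≠ 0 := by omega
  simpa [hb] using h

theorem IsCarries.carry_nonneg_le (hc : IsCarries n b k d c) (hp : IsPalintiple n b k d) :
    ∀ j ≤ k + 1, 0 ≤ c j ∧ c j ≤ n - 1 := by
  obtain ⟨hn, hnb, -, hd, -, -, -⟩ := hp
  intro j
  induction j with
  | zero => intro; rw [hc.1]; omega
  | succ i ih =>
    intro hi
    have hrec := hc.2 i (by omega)
    have hdi := hd i (by omega)
    have hdki := hd (k - i) (by omega)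
    have hci := ih (by omega)
    constructor
    · by_contra! hneg
      nlinarith
    · by_contra! hbig
      nlinarith

theorem IsCarries.carry_sub_succ_eq (hc : IsCarries n b k d c) (hsym : IsSym k c)
    (hck : c (k + 1) = 0) : ∀ j ≤ k, c (k - j + 1) = c (j - 1)
  | 0, _ => by rw [Nat.sub_zero, hck, Nat.zero_sub, hc.1]
  | i + 1, hi => by rw [Nat.add_sub_cancel, ← Nat.sub_add_comm hi, Nat.add_sub_add_right,
      hsym i (by omega)]

-- At `j = 0` the truncated `c (0 - 1) = c 0 = 0` stands for the carry `c (k + 1) = 0`.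
theorem IsCarries.recurrence_reverse (hc : IsCarries n b k d c) (hsym : IsSym k c)
    (hck : c (k + 1) = 0) :
    ∀ j ≤ k, n * d j + c j = d (k - j) + b * c (j - 1) := by
  intro j hj
  have h := hc.2 (k - j) (Nat.sub_le k j)
  rwa [Nat.sub_sub_self hj, ← hsym j hj, hc.carry_sub_succ_eq hsym hck j hj] at h

theorem IsCarries.sub_one_mul_add (hc : IsCarries n b k d c) (hsym : IsSym k c)
    (hck : c (k + 1) = 0) {q : ℤ} (hq : b = (n + 1) * q) (hn : n + 1 ≠ 0) :
    ∀ j ≤ k, (n - 1) * d j + c j = q * (c (j + 1) + n * c (j - 1)) := by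
  intro j hj
  have h₁ := hc.2 j hj
  have h₂ := hc.recurrence_reverse hsym hck j hj
  refine mul_left_cancel₀ hn ?_
  linear_combination h₁ + n * h₂ + (c (j + 1) + n * c (j - 1)) * hq

theorem IsCarries.carry_eq_zero_or_eq (hc : IsCarries n b k d c) (hp : IsPalintiple n b k d)
    (hsym : IsSym k c) (hdvd : n + 1 ∣ b) : ∀ j ≤ k + 1, c j = 0 ∨ c j = n - 1 := by
  have hn : 1 < n := hp.1
  have hck := hc.carry_succ_eq_zero_s13 hp
  obtain ⟨q, hq⟩ := hdvd
  have hrel := hc.sub_one_mul_add hsym hck hq (by omega)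
  have hdvdc := dvd_of_dvd_recurrence (q := q) (r := n) (s := n - 1) (by omega) hc.1 hck fun j hj =>
    ⟨d j, by linear_combination -(hrel j hj)⟩
  intro j hj
  obtain ⟨hc0, hcn⟩ := hc.carry_nonneg_le hp j hj
  rcases hcn.lt_or_eq with hlt | heq
  · exact Or.inl (Int.eq_zero_of_dvd_of_nonneg_of_lt hc0 hlt (hdvdc j hj))
  · exact Or.inr heq

theorem IsCarries.carry_le_carry_succ (hc : IsCarries n b k d c) (hp : IsPalintiple n b k d)
    (hsym : IsSym k c) (hdvd : n + 1 ∣ b) {m : ℕ} (hkm : k = 2 * m) : c m ≤ c (m + 1) := by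
  have ⟨hn, _, _, hdig, _⟩ := hp
  have hrec := hc.2 m (by omega)
  rw [show k - m = m by omega] at hrec
  have hdm := (hdig m (by omega)).1
  rcases hc.carry_eq_zero_or_eq hp hsym hdvd (m + 1) (by omega) with h | h
  · rw [h] at hrec ⊢
    nlinarith
  · exact h ▸ (hc.carry_nonneg_le hp m (by omega)).2

end Carries

section Field

variable {K : Type*} [Field K] {k : ℕ} {z : K}

theorem coeffEval_inv (hz : z ≠ 0) (a : ℕ → ℤ) :
    z ^ k * coeffEval k a z⁻¹ = coeffEval k (fun j => a (k - j)) z := by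
  rw [coeffEval, coeffEval, mul_sum, ← sum_range_reflect _ (k + 1)]
  refine sum_congr rfl fun j hj => ?_
  have hjk : j ≤ k := Nat.le_of_lt_succ (mem_range.mp hj)
  rw [Nat.add_sub_cancel, inv_pow, ← Nat.sub_add_cancel hjk, pow_add, Nat.add_sub_cancel]
  field_simp

theorem coeffEval_neg_one_eq_zero [CharZero K] {c : ℕ → ℤ} (hk : Odd k) (hsym : IsSym k c) :
    coeffEval k c (-1 : K) = 0 := by
  have h := coeffEval_inv (k := k) (neg_ne_zero.mpr (one_ne_zero' K)) c
  rw [inv_neg, inv_one, hk.neg_one_pow, coeffEval_congr (fun j hj => (hsym j hj).symm)] at h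
  exact add_self_eq_zero.mp (by linear_combination -h)

variable {n b : ℤ} {d c : ℕ → ℤ}

theorem IsCarries.intCast_mul_coeffEval_sub (hc : IsCarries n b k d c) (hsym : IsSym k c)
    (hck : c (k + 1) = 0) (hz : z ≠ 0) :
    n * coeffEval k d z - coeffEval k (fun j => d (k - j)) z = (b * z - 1) * coeffEval k c z := by
  have h := hc.mul_coeffEval_sub z⁻¹
  rw [hck, Int.cast_zero, mul_zero, zero_mul, sub_zero] at h
  have hD := coeffEval_inv (k := k) hz d
  have hR : z ^ k * coeffEval k (fun j => d (k - j)) z⁻¹ = coeffEval k d z := by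
    rw [coeffEval_inv hz]
    exact coeffEval_congr (fun j hj => by rw [Nat.sub_sub_self hj]) z
  have hC : z ^ k * coeffEval k c z⁻¹ = coeffEval k c z := by
    rw [coeffEval_inv hz]
    exact coeffEval_congr (fun j hj => (hsym j hj).symm) z
  have hzk : z ^ (k + 1) * z⁻¹ = z ^ k := by
    rw [pow_succ, mul_assoc, mul_inv_cancel₀ hz, mul_one]
  linear_combination -z ^ (k + 1) * h + hD - n * hR - (1 - b * z) * hC +
    (coeffEval k d z⁻¹ - n * coeffEval k (fun j => d (k - j)) z⁻¹ - coeffEval k c z⁻¹) * hzk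

theorem IsCarries.coeffEval_eq_zero_of_coeffEval_carries [CharZero K] (hc : IsCarries n b k d c)
    (hsym : IsSym k c) (hck : c (k + 1) = 0) (hn : 1 < n) (hz : z ≠ 0)
    (hC : coeffEval k c z = 0) :
    coeffEval k d z = 0 ∧ coeffEval k (fun j => d (k - j)) z = 0 := by
  have h₁ := hc.mul_coeffEval_sub z
  simp only [hC, hck, Int.cast_zero, mul_zero, zero_mul, sub_zero, mul_eq_zero, hz,
    false_or] at h₁
  have h₂ := hc.intCast_mul_coeffEval_sub hsym hck hz
  rw [hC, mul_zero] at h₂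
  have hn' : (n : K) ^ 2 - 1 ≠ 0 := by
    have : n ^ 2 - 1 ≠ 0 := by nlinarith
    exact_mod_cast this
  have hR : coeffEval k (fun j => d (k - j)) z = 0 := by
    refine (mul_eq_zero.mp ?_).resolve_left hn'
    linear_combination h₂ - n * h₁
  exact ⟨by linear_combination h₁ + n * hR, hR⟩

end Field

section UnitCircle

open Real

theorem sum_range_cos_sub_mul_two_pi_div {M i j : ℕ} (hi : i < M) (hj : j < M) :
    ∑ t ∈ range M, cos (((i : ℝ) - j) * (2 * π * t / M)) = if i = j then (M : ℝ) else 0 := by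
  split_ifs with hij
  · simp [hij]
  set a : ℤ := (i : ℤ) - j
  have hζ := Complex.isPrimitiveRoot_exp M (by omega)
  set ζ := Complex.exp (2 * π * Complex.I / M)
  have hω : ζ ^ a ≠ 1 := by
    rw [Ne, hζ.zpow_eq_one_iff_dvd]
    exact fun h => hij (by have := Int.eq_zero_of_abs_lt_dvd h (by rw [abs_lt]; omega); omega)
  have hωM : (ζ ^ a) ^ M = 1 := by
    rw [← zpow_natCast, ← zpow_mul, mul_comm, zpow_mul, zpow_natCast, hζ.pow_eq_one, one_zpow]
  have hre : ∀ t : ℕ, cos (((i : ℝ) - j) * (2 * π * t / M)) = ((ζ ^ a) ^ t).re := by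
    intro t
    rw [← zpow_natCast, ← zpow_mul, ← Complex.exp_int_mul, ← Complex.exp_ofReal_mul_I_re]
    congr 2
    push_cast [a]
    ring
  rw [sum_congr rfl fun t _ => hre t, ← Complex.re_sum, geom_sum_eq hω, hωM, sub_self, zero_div,
    Complex.zero_re]

variable {m : ℕ} {c : ℕ → ℝ}

noncomputable def cosSum (m : ℕ) (c : ℕ → ℝ) (θ : ℝ) : ℝ :=
  ∑ j ∈ range (2 * m + 1), c j * cos (((j : ℝ) - m) * θ)

theorem continuous_cosSum : Continuous (cosSum m c) := by
  unfold cosSum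
  fun_prop

theorem sum_mul_exp_pow_eq_exp_mul_cosSum (hsym : ∀ j ≤ 2 * m, c j = c (2 * m - j)) (θ : ℝ) :
    ∑ j ∈ range (2 * m + 1), (c j : ℂ) * Complex.exp (θ * Complex.I) ^ j =
      Complex.exp (m * θ * Complex.I) * cosSum m c θ := by
  set x : ℕ → ℂ := fun j => ((j : ℂ) - m) * θ
  set S := ∑ j ∈ range (2 * m + 1), (c j : ℂ) * Complex.exp (x j * Complex.I)
  have hshift : ∑ j ∈ range (2 * m + 1), (c j : ℂ) * Complex.exp (θ * Complex.I) ^ j =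
      Complex.exp (m * θ * Complex.I) * S := by
    rw [mul_sum]
    refine sum_congr rfl fun j _ => ?_
    have h : Complex.exp (θ * Complex.I) ^ j =
        Complex.exp (m * θ * Complex.I) * Complex.exp (x j * Complex.I) := by
      rw [← Complex.exp_nat_mul, ← Complex.exp_add]
      congr 1
      simp only [x]
      ring
    rw [h]
    ring
  -- Reflecting `j ↦ 2m - j` turns `x j` into `-x j`, so `S` is also `∑ c j * exp (-x j * I)`.
  have hreflect : S = ∑ j ∈ range (2 * m + 1), (c j : ℂ) * Complex.exp (-x j * Complex.I) := by
    rw [← sum_range_reflect]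
    refine sum_congr rfl fun j hj => ?_
    have hj : j ≤ 2 * m := Nat.le_of_lt_succ (mem_range.mp hj)
    rw [Nat.add_sub_cancel, ← hsym j hj]
    simp only [x, Nat.cast_sub hj]
    push_cast
    ring_nf
  have hcos : 2 * S = 2 * (cosSum m c θ : ℂ) := by
    calc 2 * S = S + S := two_mul S
      _ = ∑ j ∈ range (2 * m + 1), (c j : ℂ) * (2 * Complex.cos (x j)) := by
        nth_rw 2 [hreflect]
        rw [← sum_add_distrib]
        exact sum_congr rfl fun j _ => by rw [Complex.two_cos]; ring
      _ = 2 * (cosSum m c θ : ℂ) := by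
        rw [cosSum]
        push_cast
        rw [mul_sum]
        exact sum_congr rfl fun j _ => by ring
  rw [hshift, mul_left_cancel₀ two_ne_zero hcos]

theorem cosSum_mul_one_sub_cos (hm : 1 ≤ m) (θ : ℝ) :
    cosSum m c θ * (1 - cos θ) = ∑ j ∈ range (2 * m + 1), c j * (cos (((j : ℝ) - m) * θ) -
      cos (((j : ℝ) - (m - 1 : ℕ)) * θ) / 2 - cos (((j : ℝ) - (m + 1 : ℕ)) * θ) / 2) := by
  rw [cosSum, sum_mul]
  refine sum_congr rfl fun j _ => ?_
  push_cast [Nat.cast_sub hm]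
  rw [show ((j : ℝ) - (m - 1)) * θ = ((j : ℝ) - m) * θ + θ by ring,
    show ((j : ℝ) - (m + 1)) * θ = ((j : ℝ) - m) * θ - θ by ring, cos_add, cos_sub]
  ring

theorem sum_cosSum_mul_one_sub_cos (hm : 1 ≤ m) {M : ℕ} (hM : 2 * m < M) :
    ∑ t ∈ range M, cosSum m c (2 * π * t / M) * (1 - cos (2 * π * t / M)) =
      M * (c m - (c (m - 1) + c (m + 1)) / 2) := by
  simp only [cosSum_mul_one_sub_cos hm]
  rw [sum_comm]
  have hσ : ∀ j ∈ range (2 * m + 1), ∀ l ≤ 2 * m,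
      ∑ t ∈ range M, cos (((j : ℝ) - l) * (2 * π * t / M)) = if j = l then (M : ℝ) else 0 :=
    fun j hj l hl => sum_range_cos_sub_mul_two_pi_div (by simp at hj; omega) (by omega)
  rw [sum_congr rfl fun j hj => by
    rw [← mul_sum, sum_sub_distrib, sum_sub_distrib, ← sum_div, ← sum_div, hσ j hj m (by omega),
      hσ j hj (m - 1) (by omega), hσ j hj (m + 1) (by omega)]]
  simp only [mul_sub, mul_ite, mul_zero, ite_div, zero_div, sum_sub_distrib, sum_ite_eq',
    mem_range, if_pos (show m < 2 * m + 1 by omega), if_pos (show m - 1 < 2 * m + 1 by omega),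
    if_pos (show m + 1 < 2 * m + 1 by omega)]
  ring

theorem exists_norm_eq_one_sum_mul_pow_eq_zero (hm : 1 ≤ m)
    (hsym : ∀ j ≤ 2 * m, c j = c (2 * m - j)) (hsum : 0 ≤ ∑ j ∈ range (2 * m + 1), c j)
    (hmid : c m ≤ c (m + 1)) :
    ∃ z : ℂ, ‖z‖ = 1 ∧ ∑ j ∈ range (2 * m + 1), (c j : ℂ) * z ^ j = 0 := by
  set M := 2 * m + 1
  have hsample : ∑ t ∈ range M, cosSum m c (2 * π * t / M) * (1 - cos (2 * π * t / M)) ≤ 0 := by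
    rw [sum_cosSum_mul_one_sub_cos hm (Nat.lt_succ_self _)]
    have hc : c (m - 1) = c (m + 1) := by
      rw [hsym (m + 1) (by omega), show 2 * m - (m + 1) = m - 1 by omega]
    exact mul_nonpos_of_nonneg_of_nonpos (Nat.cast_nonneg M) (by linarith)
  -- The weights `1 - cos` are nonnegative and positive at `t = 1`, so `cosSum` cannot be positive
  -- at all sample points.
  obtain ⟨θ₀, hθ₀, hneg⟩ : ∃ θ₀, 0 ≤ θ₀ ∧ cosSum m c θ₀ ≤ 0 := by
    by_contra! hpos
    have hcos : cos (2 * π * (1 : ℕ) / M) < 1 := by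
      have hx : 0 < 2 * π * (1 : ℕ) / M := by positivity
      have hx' : 2 * π * (1 : ℕ) / M < 2 * π := by
        have hM : (1 : ℝ) < M := by norm_cast; omega
        rw [Nat.cast_one, mul_one, div_lt_iff₀ (by positivity)]
        nlinarith [pi_pos]
      refine (cos_le_one _).lt_of_ne fun h => hx.ne' ?_
      exact (cos_eq_one_iff_of_lt_of_lt (by linarith) hx').mp h
    have hweight : ∀ t : ℕ, 0 ≤ 1 - cos (2 * π * t / M) := fun t => by
      linarith [cos_le_one (2 * π * t / M)]
    have : 0 < ∑ t ∈ range M, cosSum m c (2 * π * t / M) * (1 - cos (2 * π * t / M)) :=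
      sum_pos' (fun t _ => mul_nonneg (hpos _ (by positivity)).le (hweight t))
        ⟨1, by simp [M]; omega, mul_pos (hpos _ (by positivity)) (by linarith)⟩
    linarith
  have hf0 : 0 ≤ cosSum m c 0 := by simpa [cosSum] using hsum
  obtain ⟨θ, -, hθ⟩ := intermediate_value_Icc' hθ₀ continuous_cosSum.continuousOn ⟨hneg, hf0⟩
  refine ⟨Complex.exp (θ * Complex.I), Complex.norm_exp_ofReal_mul_I θ, ?_⟩
  rw [sum_mul_exp_pow_eq_exp_mul_cosSum hsym, hθ, Complex.ofReal_zero, mul_zero]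

end UnitCircle

/-- **Corollary.** Digit and reverse-digit polynomials of a 1089 palintiple each have
at least one root on the unit circle. -/
theorem digit_polys_root_on_unit_circle (n b : ℤ) (k : ℕ) (d c : ℕ → ℤ)
    (hp : IsPalintiple n b k d) (hc : IsCarries n b k d c)
    (hsym : IsSym k c) (hdvd : n + 1 ∣ b) :
    (∃ z : ℂ, ‖z‖ = 1 ∧ ∑ j ∈ range (k + 1), (d j : ℂ) * z ^ j = 0) ∧
    (∃ w : ℂ, ‖w‖ = 1 ∧ ∑ j ∈ range (k + 1), (d (k - j) : ℂ) * w ^ j = 0) := by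
  have ⟨hn, _, hk, _⟩ := hp
  have hck := hc.carry_succ_eq_zero_s13 hp
  suffices ∃ z : ℂ, ‖z‖ = 1 ∧ coeffEval k c z = 0 by
    obtain ⟨z, hz, hC⟩ := this
    have hz0 : z ≠ 0 := by rintro rfl; simp at hz
    obtain ⟨hD, hR⟩ := hc.coeffEval_eq_zero_of_coeffEval_carries hsym hck hn hz0 hC
    exact ⟨⟨z, hz, hD⟩, ⟨z, hz, hR⟩⟩
  obtain ⟨m, rfl | rfl⟩ := Nat.even_or_odd' k
  · have hm : 1 ≤ m := by omega
    obtain ⟨z, hz, hC⟩ := exists_norm_eq_one_sum_mul_pow_eq_zero (c := fun j => (c j : ℝ)) hm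
      (fun j hj => by rw [hsym j hj])
      (sum_nonneg fun j hj => by
        exact_mod_cast (hc.carry_nonneg_le hp j (by simp at hj; omega)).1)
      (by exact_mod_cast hc.carry_le_carry_succ hp hsym hdvd rfl)
    exact ⟨z, hz, by simpa [coeffEval] using hC⟩
  · exact ⟨-1, by simp, coeffEval_neg_one_eq_zero (odd_two_mul_add_one m) hsym⟩
end
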